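/- arXiv:2110.05959 — 9 statements merged into one kernel-verified Lean document; each statement's English description precedes it below -/
import Mathlib

section
/- For a prime power q and integer n ≥ 0, let n₁ = ⌊(n+2)/2⌋ and n₂ = ⌊(n+3)/2⌋. If α = (α₀,...,αₙ) ∈ F_q^{n+1} satisfies det H_{i,i}(α) = 0 for all i = 1,...,n₁ (i.e. ρ(α) = 0), then α₀ = α₁ = ... = α_{n₁-1} = 0; that is, the square matrix H_{n₁,n₁}(α) is strictly lower skew-triangular. -/
open Matrix Polynomial

/-- The `l × m` Hankel matrix whose `(i,j)` entry (zero-indexed) is `α (i + j)`. -/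
def hankel (F : Type) [Field F] (l m : ℕ) (α : ℕ → F) : Matrix (Fin l) (Fin m) F :=
  Matrix.of fun i j => α (i.1 + j.1)

/-- `ρ(α)`: the largest `l ≤ n₁ = (n+2)/2` such that the top-left `l × l` Hankel matrix
of `α` is invertible (`0` if none exists). -/
noncomputable def rhoC (F : Type) [Field F] (n : ℕ) (α : ℕ → F) : ℕ :=
  sSup {l | l ≤ (n + 2) / 2 ∧ (hankel F l l α).det ≠ 0}

/-- `π(α) = rank H_{n₁,n₂}(α) - ρ(α)`. -/
noncomputable def piC (F : Type) [Field F] (n : ℕ) (α : ℕ → F) : ℕ :=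
  (hankel F ((n + 2) / 2) ((n + 3) / 2) α).rank - rhoC F n α

/-- `deg B ≤ k` for an integer bound `k` (so `k < 0` forces `B = 0`). -/
def degLE (F : Type) [Field F] (B : Polynomial F) (k : ℤ) : Prop :=
  ∀ i : ℕ, k < (i : ℤ) → B.coeff i = 0

/-- `A₁, A₂` are characteristic polynomials for the sequence `α` (of length `n+1`) with
first characteristic degree `c₁ = r` and second characteristic degree `c₂ = n+2-r`:
the kernels of all the Hankel matrices `H_{l,m}(α)`, `l+m-2 = n`, consist exactly of the
(coefficient vectors of) polynomials `B₁A₁ + B₂A₂` with `deg B₁ ≤ m - c₁ - 1` and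
`deg B₂ ≤ m - c₂ - 1`. -/
def IsCharSeq (F : Type) [Field F] (n r : ℕ) (A₁ A₂ : Polynomial F) (α : ℕ → F) : Prop :=
  ∀ l m : ℕ, 1 ≤ l → 1 ≤ m → l + m = n + 2 →
    {v : Fin m → F | (hankel F l m α).mulVec v = 0} =
    {v : Fin m → F | ∃ B₁ B₂ : Polynomial F,
      degLE F B₁ ((m : ℤ) - r - 1) ∧ degLE F B₂ ((m : ℤ) - ((n : ℤ) + 2 - r) - 1) ∧
      v = fun i : Fin m => (B₁ * A₁ + B₂ * A₂).coeff (i : ℕ)}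

/-- A sequence `α ∈ F^{n+1}` viewed as a function `ℕ → F` (zero beyond index `n`). -/
def extSeq (F : Type) [Field F] (n : ℕ) (α : Fin (n + 1) → F) : ℕ → F :=
  fun i => if h : i < n + 1 then α ⟨i, h⟩ else 0

/-- The extension of a sequence of length `n+1` by a new entry `c` at index `n+1`. -/
def extendSeq (F : Type) [Field F] (n : ℕ) (α : ℕ → F) (c : F) : ℕ → F :=
  fun i => if i = n + 1 then c else α i

/-- if every top-left square Hankel submatrix `H_{i,i}(α)`, `1 ≤ i ≤ n₁`,
is singular (i.e. `ρ(α) = 0`), then `α₀ = ⋯ = α_{n₁-1} = 0`, so `H_{n₁,n₁}(α)` is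
strictly lower skew-triangular. -/
theorem stmt_0 (F : Type) [Field F] [Fintype F] (n : ℕ) (α : ℕ → F)
    (hdet : ∀ i : ℕ, 1 ≤ i → i ≤ (n + 2) / 2 → (hankel F i i α).det = 0) :
    ∀ j : ℕ, j < (n + 2) / 2 → α j = 0 := by
  intro j
  induction j using Nat.strong_induction_on with
  | _ j ih =>
    intro hj
    have hzero : ∀ m < j, α m = 0 := fun m hm => ih m hm (hm.trans hj)
    have hd := hdet (j + 1) (Nat.le_add_left 1 j) hj
    set M : Matrix (Fin (j + 1)) (Fin (j + 1)) F := hankel F (j + 1) (j + 1) α with hM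
    set N : Matrix (Fin (j + 1)) (Fin (j + 1)) F := M.submatrix id Fin.revPerm with hN
    have hNdet : N.det = 0 := by
      rw [hN, Matrix.det_permute', hd, mul_zero]
    have htri : N.BlockTriangular OrderDual.toDual := by
      intro i k hik
      have hik' : (i : ℕ) < (k : ℕ) := hik
      have : (i : ℕ) + (Fin.revPerm k : ℕ) < j := by
        simp only [Fin.revPerm_apply, Fin.val_rev]
        omega
      simpa [hN, hM, hankel] using hzero _ this
    have hdiag : N.det = α j ^ (j + 1) := by
      rw [Matrix.det_of_lowerTriangular N htri]
      have : ∀ i : Fin (j + 1), N i i = α j := by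
        intro i
        have : (i : ℕ) + (Fin.revPerm i : ℕ) = j := by
          simp only [Fin.revPerm_apply, Fin.val_rev]
          omega
        simp only [hN, hM, hankel, Matrix.submatrix_apply, id_eq, Matrix.of_apply,
          Fin.revPerm_apply, Fin.val_rev]
        congr 1
      rw [Finset.prod_congr rfl fun i _ => this i]
      simp [Finset.prod_const]
    have := hdiag.symm.trans hNdet
    exact pow_eq_zero_iff (Nat.succ_ne_zero j) |>.mp this
end

section
/- Let q be a prime power, n ≥ 0, n₁ = ⌊(n+2)/2⌋, n₂ = ⌊(n+3)/2⌋, and let π₁ satisfy 0 ≤ π₁ ≤ n₁ if n is odd and 0 ≤ π₁ ≤ n₁ - 1 if n is even. For α ∈ F_q^{n+1} with ρ(α) = 0, one has π(α) = π₁ if and only if αᵢ = 0 for all i < (n+1) - π₁, α_{(n+1)-π₁} ≠ 0, and the remaining entries α_i for i > (n+1)-π₁ are arbitrary in F_q. -/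
open Matrix Polynomial

/-!
If `α₀ = ⋯ = α_{k-1} = 0 ≠ α_k`, then the `(k+1) × (k+1)` Hankel matrix of `α` is
anti-triangular with nonzero anti-diagonal, so `ρ(α) = 0` forces `k ≥ n₁`. For such `k` the
first `k + 1 - n₂` rows of `H_{n₁,n₂}(α)` vanish and the remaining `n + 1 - k` rows contain an
anti-triangular square block with anti-diagonal `α_k`; hence `π(α) = rank H_{n₁,n₂}(α) = n + 1 - k`,
which equals `π₁` exactly when `k = n + 1 - π₁`.
-/

lemma Matrix.rank_le_card_of_row_eq_zero_of_notMem_range {K m n ι : Type*} [Field K]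
    [Fintype m] [Fintype n] [Fintype ι] (A : Matrix m n K) (f : ι → m)
    (h : ∀ i, i ∉ Set.range f → A i = 0) : A.rank ≤ Fintype.card ι := by
  rw [A.rank_eq_finrank_span_row]
  calc Module.finrank K (Submodule.span K (Set.range A))
      ≤ Module.finrank K (Submodule.span K (Set.range (A ∘ f))) := by
        refine Submodule.finrank_mono (Submodule.span_le.2 ?_)
        rintro _ ⟨i, rfl⟩
        by_cases hi : i ∈ Set.range f
        · obtain ⟨t, rfl⟩ := hi
          exact Submodule.subset_span ⟨t, rfl⟩
        · rw [h i hi]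
          exact Submodule.zero_mem _
    _ ≤ Fintype.card ι := finrank_range_le_card _

section Hankel

variable {F : Type} [Field F]

lemma det_toeplitz_eq_pow {α : ℕ → F} {k r : ℕ} (h0 : ∀ i < k, α i = 0) (hr : r ≤ k + 1) :
    (Matrix.of fun t s : Fin r => α (k + t - s)).det = α k ^ r := by
  rw [Matrix.det_of_isLowerTriangular]
  · simp
  · intro t s hts
    have : (t : ℕ) < s := hts
    exact h0 _ (by omega)

lemma det_hankel_ne_zero {α : ℕ → F} {k : ℕ} (h0 : ∀ i < k, α i = 0) (hk : α k ≠ 0) :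
    (hankel F (k + 1) (k + 1) α).det ≠ 0 := by
  have hrev : (hankel F (k + 1) (k + 1) α).submatrix id Fin.revPerm =
      Matrix.of fun t s : Fin (k + 1) => α (k + t - s) := by
    ext t s
    simp only [Matrix.submatrix_apply, id_eq, hankel, Matrix.of_apply, Fin.revPerm_apply,
      Fin.val_rev]
    congr 1
    omega
  have hdet := Matrix.det_permute' Fin.revPerm (hankel F (k + 1) (k + 1) α)
  rw [hrev, det_toeplitz_eq_pow h0 le_rfl] at hdet
  intro h
  rw [h, mul_zero] at hdet
  exact pow_ne_zero _ hk hdet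

noncomputable def leadIndex (n : ℕ) (α : ℕ → F) : ℕ :=
  sInf {i | n < i ∨ α i ≠ 0}

lemma leadIndex_mem (n : ℕ) (α : ℕ → F) : n < leadIndex n α ∨ α (leadIndex n α) ≠ 0 :=
  Nat.sInf_mem (s := {i | n < i ∨ α i ≠ 0}) ⟨n + 1, Or.inl n.lt_succ_self⟩

lemma leadIndex_le (n : ℕ) (α : ℕ → F) : leadIndex n α ≤ n + 1 :=
  Nat.sInf_le (Or.inl n.lt_succ_self)

lemma apply_eq_zero_of_lt_leadIndex {n i : ℕ} {α : ℕ → F} (hi : i < leadIndex n α) :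
    α i = 0 := by
  have := Nat.notMem_of_lt_sInf hi
  simp only [Set.mem_ofPred_eq, not_or, not_not] at this
  exact this.2

lemma leadIndex_eq_iff {n k : ℕ} {α : ℕ → F} (hk : k ≤ n + 1) :
    leadIndex n α = k ↔
      (∀ i, i ≤ n → i < k → α i = 0) ∧ (∀ i, i ≤ n → i = k → α i ≠ 0) := by
  constructor
  · rintro rfl
    refine ⟨fun i _ hi => apply_eq_zero_of_lt_leadIndex hi, ?_⟩
    rintro i hi rfl
    exact (leadIndex_mem n α).resolve_left (by omega)
  · rintro ⟨hzero, hlead⟩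
    refine IsLeast.csInf_eq ⟨?_, fun i hi => ?_⟩
    · by_cases hkn : k ≤ n
      · exact Or.inr (hlead k hkn rfl)
      · exact Or.inl (by omega)
    · by_contra! hik
      rcases hi with hi | hi
      · omega
      · exact hi (hzero i (by omega) hik)

lemma rank_hankel_eq_sub_leadIndex {n l m : ℕ} {α : ℕ → F} (hlm : l + m = n + 2)
    (hl : l ≤ leadIndex n α + 1) (hm : m ≤ leadIndex n α + 1) :
    (hankel F l m α).rank = n + 1 - leadIndex n α := by
  set k := leadIndex n α
  have hk := leadIndex_le n α
  have h0 : ∀ i < k, α i = 0 := fun i hi => apply_eq_zero_of_lt_leadIndex hi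
  set r := n + 1 - k
  set d := k + 1 - m
  apply le_antisymm
  · -- rows of index `< d` only see the vanishing entries `α₀, …, α_{k-1}`
    have hrows := (hankel F l m α).rank_le_card_of_row_eq_zero_of_notMem_range
      (fun t : Fin r => (⟨d + t, by omega⟩ : Fin l)) fun i hi => by
        funext j
        have hid : (i : ℕ) < d := by
          by_contra! hid
          exact hi ⟨⟨i - d, by omega⟩, Fin.ext (by simp only; omega)⟩
        exact h0 _ (by omega)
    simpa using hrows
  · rcases Nat.eq_zero_or_pos r with hr | hr
    · omega
    have hblock : (hankel F l m α).submatrix (fun t : Fin r => ⟨d + t, by omega⟩)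
        (fun s : Fin r => ⟨m - 1 - s, by omega⟩) =
        Matrix.of fun t s : Fin r => α (k + t - s) := by
      ext t s
      simp only [Matrix.submatrix_apply, hankel, Matrix.of_apply]
      congr 1
      omega
    have hdet : (Matrix.of fun t s : Fin r => α (k + t - s)).det ≠ 0 := by
      rw [det_toeplitz_eq_pow h0 (by omega)]
      exact pow_ne_zero _ ((leadIndex_mem n α).resolve_left (by omega))
    calc r = (Matrix.of fun t s : Fin r => α (k + t - s)).rank := by
          rw [Matrix.rank_of_det_ne_zero hdet, Fintype.card_fin]
      _ ≤ (hankel F l m α).rank := hblock ▸ Matrix.rank_submatrix_le _ _ _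

lemma le_rhoC {n l : ℕ} {α : ℕ → F} (hl : l ≤ (n + 2) / 2) (hdet : (hankel F l l α).det ≠ 0) :
    l ≤ rhoC F n α :=
  le_csSup ⟨(n + 2) / 2, fun _ h => h.1⟩ ⟨hl, hdet⟩

lemma le_leadIndex_of_rhoC_eq_zero {n : ℕ} {α : ℕ → F} (hρ : rhoC F n α = 0) :
    (n + 2) / 2 ≤ leadIndex n α := by
  by_contra! hlt
  have hdet := det_hankel_ne_zero (α := α) (fun i hi => apply_eq_zero_of_lt_leadIndex hi)
    ((leadIndex_mem n α).resolve_left (by omega))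
  have := le_rhoC (n := n) (by omega) hdet
  omega

lemma piC_eq_sub_leadIndex {n : ℕ} {α : ℕ → F} (hρ : rhoC F n α = 0) :
    piC F n α = n + 1 - leadIndex n α := by
  have hk := le_leadIndex_of_rhoC_eq_zero hρ
  rw [piC, hρ, Nat.sub_zero]
  exact rank_hankel_eq_sub_leadIndex (by omega) (by omega) (by omega)

end Hankel

theorem stmt_1_general (F : Type) [Field F] (n π₁ : ℕ)
    (α : ℕ → F) (hρ : rhoC F n α = 0) :
    piC F n α = π₁ ↔
      ((∀ i : ℕ, i ≤ n → i < n + 1 - π₁ → α i = 0) ∧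
       (∀ i : ℕ, i ≤ n → i = n + 1 - π₁ → α i ≠ 0)) := by
  have hpos : 1 ≤ leadIndex n α := le_trans (by omega) (le_leadIndex_of_rhoC_eq_zero hρ)
  have hle := leadIndex_le n α
  rw [piC_eq_sub_leadIndex hρ, ← leadIndex_eq_iff (by omega)]
  omega

/-- for `ρ(α) = 0`, one has `π(α) = π₁` iff `αᵢ = 0` for all `i < (n+1) - π₁`
and `α_{(n+1)-π₁} ≠ 0` (the remaining entries being arbitrary). -/
theorem stmt_1 (F : Type) [Field F] [Fintype F] (n π₁ : ℕ)
    (hπo : Odd n → π₁ ≤ (n + 2) / 2)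
    (hπe : Even n → π₁ ≤ (n + 2) / 2 - 1)
    (α : ℕ → F) (hρ : rhoC F n α = 0) :
    piC F n α = π₁ ↔
      ((∀ i : ℕ, i ≤ n → i < n + 1 - π₁ → α i = 0) ∧
       (∀ i : ℕ, i ≤ n → i = n + 1 - π₁ → α i ≠ 0)) :=
  stmt_1_general F n π₁ α hρ
end

section
/- Let q be a prime power and α ∈ F_q^{n+1} with ρ(α) = ρ₁ ∈ {1,...,n₁-1}. Let l+m-2 = n with l > ρ₁, set H := H_{l,m}(α), and let x = (x₀,...,x_{ρ₁-1})ᵀ be the unique solution of H[ρ₁,ρ₁] x = (α_{ρ₁},...,α_{2ρ₁-1})ᵀ. Applying the row operations Rᵢ → Rᵢ - x₀ R_{i-ρ₁} - ... - x_{ρ₁-1} R_{i-1} for i = l, l-1, ..., ρ₁+1 (in that order) yields a matrix whose top ρ₁ rows form the Hankel matrix H_{ρ₁,m}(α') with α' = (α₀,...,α_{ρ₁+m-2}), and whose bottom l - ρ₁ rows form a Hankel matrix H_{l-ρ₁,m}(β) for a sequence β = (β_{ρ₁},...,β_n) with βᵢ = 0 for i < (n+1) - π(α), β_{(n+1)-π(α)}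 ≠ 0. Moreover the sequence β is independent of the specific values of l and m (so long as l > ρ₁). -/
open Matrix Polynomial

def betaSeq {F : Type} [Field F] (ρ₁ : ℕ) (α : ℕ → F) (x : Fin ρ₁ → F) : ℕ → F :=
  fun s => α s - ∑ t : Fin ρ₁, x t * α (s - ρ₁ + t.1)

def elimMat (F : Type) [Field F] (ρ₁ l : ℕ) (x : Fin ρ₁ → F) : Matrix (Fin l) (Fin l) F :=
  Matrix.of fun i j =>
    if i = j then 1
    else if h : ρ₁ ≤ i.1 ∧ i.1 - ρ₁ ≤ j.1 ∧ j.1 < i.1 then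
      -x ⟨j.1 - (i.1 - ρ₁), by omega⟩ else 0

lemma elimMat_det (F : Type) [Field F] (ρ₁ l : ℕ) (x : Fin ρ₁ → F) :
    (elimMat F ρ₁ l x).det = 1 := by
  rw [Matrix.det_of_lowerTriangular _ ?_]
  · simp [elimMat]
  · intro i j hij
    have hij' : i.1 < j.1 := hij
    simp only [elimMat, Matrix.of_apply]
    rw [if_neg (by intro h; rw [h] at hij'; exact lt_irrefl _ hij'), dif_neg (by omega)]

lemma elim_mul (F : Type) [Field F] (ρ₁ l m : ℕ) (x : Fin ρ₁ → F) (α : ℕ → F) :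
    elimMat F ρ₁ l x * hankel F l m α = Matrix.of (fun (i : Fin l) (j : Fin m) =>
      if i.1 < ρ₁ then α (i.1 + j.1) else betaSeq ρ₁ α x (i.1 + j.1)) := by
  ext i j
  rw [Matrix.mul_apply]
  by_cases hi : i.1 < ρ₁
  · rw [Finset.sum_eq_single_of_mem (f := fun k => elimMat F ρ₁ l x i k * hankel F l m α k j)
      i (Finset.mem_univ i) ?_]
    · simp [elimMat, hankel, hi]
    · intro k _ hne
      show elimMat F ρ₁ l x i k * hankel F l m α k j = 0
      have : elimMat F ρ₁ l x i k = 0 := by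
        simp only [elimMat, Matrix.of_apply]
        rw [if_neg (fun h => hne (h.symm)), dif_neg (by omega)]
      rw [this, zero_mul]
  · push_neg at hi
    rw [← Finset.sum_erase_add _ _ (Finset.mem_univ i)]
    have hii : elimMat F ρ₁ l x i i * hankel F l m α i j = α (i.1 + j.1) := by
      simp [elimMat, hankel]
    rw [hii]
    have hrest : ∑ k ∈ Finset.univ.erase i, elimMat F ρ₁ l x i k * hankel F l m α k j
        = -∑ t : Fin ρ₁, x t * α (i.1 - ρ₁ + t.1 + j.1) := by
      have hsub : Finset.image (fun t : Fin ρ₁ => (⟨i.1 - ρ₁ + t.1, by have := i.2; have := t.2; omega⟩ : Fin l))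
          Finset.univ ⊆ Finset.univ.erase i := by
        intro k hk
        simp only [Finset.mem_image, Finset.mem_univ, true_and] at hk
        obtain ⟨t, rfl⟩ := hk
        refine Finset.mem_erase.mpr ⟨?_, Finset.mem_univ _⟩
        intro h
        have h2 := congrArg Fin.val h
        have ht := t.2
        simp only [Fin.val_mk] at h2
        omega
      rw [← Finset.sum_subset hsub ?_]
      · rw [Finset.sum_image (by
          intro t _ t' _ h
          have h2 := congrArg Fin.val h
          simp only [Fin.val_mk] at h2
          exact Fin.ext (by omega))]
        rw [← Finset.sum_neg_distrib]
        refine Finset.sum_congr rfl ?_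
        intro t _
        have ht := t.2
        have hil := i.2
        have hval : elimMat F ρ₁ l x i ⟨i.1 - ρ₁ + t.1, by omega⟩ = -x t := by
          have hne2 : i ≠ (⟨i.1 - ρ₁ + t.1, by omega⟩ : Fin l) := by
            intro h
            have h2 := congrArg Fin.val h
            simp only [Fin.val_mk] at h2
            omega
          simp only [elimMat, Matrix.of_apply, if_neg hne2]
          rw [dif_pos (show ρ₁ ≤ i.1 ∧ i.1 - ρ₁ ≤ i.1 - ρ₁ + t.1 ∧ i.1 - ρ₁ + t.1 < i.1 from
            ⟨hi, by omega, by omega⟩)]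
          congr 1
          congr 1
          refine Fin.ext ?_
          show i.1 - ρ₁ + t.1 - (i.1 - ρ₁) = t.1
          omega
        show elimMat F ρ₁ l x i _ * hankel F l m α _ j = _
        rw [hval]
        show -x t * α ((i.1 - ρ₁ + t.1) + j.1) = -(x t * α (i.1 - ρ₁ + t.1 + j.1))
        ring
      · intro k hk hknot
        show elimMat F ρ₁ l x i k * hankel F l m α k j = 0
        have hkne : k ≠ i := (Finset.mem_erase.mp hk).1
        have hcond : ¬(ρ₁ ≤ i.1 ∧ i.1 - ρ₁ ≤ k.1 ∧ k.1 < i.1) := by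
          intro hc
          apply hknot
          simp only [Finset.mem_image, Finset.mem_univ, true_and]
          exact ⟨⟨k.1 - (i.1 - ρ₁), by omega⟩, Fin.ext (by simp only [Fin.val_mk]; omega)⟩
        simp only [elimMat, Matrix.of_apply]
        rw [if_neg (fun h => hkne h.symm), dif_neg hcond, zero_mul]
    rw [hrest]
    simp only [Matrix.of_apply, if_neg (not_lt.mpr hi), betaSeq]
    have hcg : ∑ t : Fin ρ₁, x t * α (i.1 - ρ₁ + t.1 + j.1)
        = ∑ t : Fin ρ₁, x t * α (i.1 + j.1 - ρ₁ + t.1) :=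
      Finset.sum_congr rfl fun t _ => by
        rw [show i.1 - ρ₁ + t.1 + j.1 = i.1 + j.1 - ρ₁ + t.1 from by omega]
    rw [hcg]
    ring

lemma det_echelon {F : Type} [Field F] {N a : ℕ} (M : Matrix (Fin N) (Fin N) F)
    (ha : a ≤ N)
    (hT : (Matrix.of fun i j : Fin a =>
        M ⟨i.1, lt_of_lt_of_le i.2 ha⟩ ⟨j.1, lt_of_lt_of_le j.2 ha⟩).det ≠ 0)
    (hZ : ∀ r c : Fin N, a ≤ r.1 → r.1 + c.1 < a + N - 1 → M r c = 0)
    (hD : ∀ r c : Fin N, a ≤ r.1 → r.1 + c.1 = a + N - 1 → M r c ≠ 0) :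
    M.det ≠ 0 := by
  intro hdet
  obtain ⟨v, hv0, hv⟩ := Matrix.exists_vecMul_eq_zero_iff.mpr hdet
  set T : Matrix (Fin a) (Fin a) F := Matrix.of fun i j : Fin a =>
        M ⟨i.1, lt_of_lt_of_le i.2 ha⟩ ⟨j.1, lt_of_lt_of_le j.2 ha⟩ with hTdef
  set w : Fin a → F := fun i => v ⟨i.1, lt_of_lt_of_le i.2 ha⟩ with hwdef
  have hsplit : ∀ j : Fin a, Matrix.vecMul w T j = 0 := by
    intro j
    have hj := congrFun hv ⟨j.1, lt_of_lt_of_le j.2 ha⟩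
    simp only [Matrix.vecMul, dotProduct, Pi.zero_apply] at hj ⊢
    rw [← hj]
    have himg : (Finset.univ : Finset (Fin N)).filter (fun r => r.1 < a)
        = Finset.image (Fin.castLE ha) Finset.univ := by
      ext r
      simp only [Finset.mem_filter, Finset.mem_univ, true_and, Finset.mem_image]
      constructor
      · intro hr; exact ⟨⟨r.1, hr⟩, Fin.ext rfl⟩
      · rintro ⟨i, rfl⟩; exact i.2
    rw [show (∑ r : Fin N, v r * M r ⟨j.1, lt_of_lt_of_le j.2 ha⟩) =
        ∑ r ∈ (Finset.univ : Finset (Fin N)).filter (fun r => r.1 < a),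
          v r * M r ⟨j.1, lt_of_lt_of_le j.2 ha⟩ from
      (Finset.sum_subset (Finset.filter_subset _ _) (by
        intro r _ hr
        simp only [Finset.mem_filter, Finset.mem_univ, true_and, not_lt] at hr
        rw [hZ r _ hr (by show r.1 + j.1 < a + N - 1; have := r.2; have := j.2; omega), mul_zero])).symm]
    rw [himg, Finset.sum_image (fun i _ i' _ h => Fin.castLE_injective ha h)]
    rfl
  have hw0 : w = 0 := Matrix.eq_zero_of_vecMul_eq_zero hT (funext hsplit)
  have hbot : ∀ t : ℕ, ∀ r : Fin N, a ≤ r.1 → N - t ≤ r.1 → v r = 0 := by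
    intro t
    induction t with
    | zero => intro r _ hr; exact absurd r.2 (by omega)
    | succ t ih =>
      intro r har hr
      by_cases hrt : N - t ≤ r.1
      · exact ih r har hrt
      have hc : a + N - 1 - r.1 < N := by have := r.2; omega
      set c : Fin N := ⟨a + N - 1 - r.1, hc⟩ with hcdef
      have hcol := congrFun hv c
      simp only [Matrix.vecMul, dotProduct, Pi.zero_apply] at hcol
      have hone : v r * M r c = 0 := by
        rw [← hcol]
        refine (Finset.sum_eq_single_of_mem (f := fun r' => v r' * M r' c) r (Finset.mem_univ r) ?_).symm
        intro r' _ hne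
        show v r' * M r' c = 0
        rcases lt_or_ge r'.1 a with h1 | h1
        · have : v r' = 0 := by
            have := congrFun hw0 ⟨r'.1, h1⟩
            simpa [hwdef] using this
          rw [this, zero_mul]
        rcases lt_or_ge r'.1 r.1 with h2 | h2
        · rw [hZ r' c h1 (by show r'.1 + (a + N - 1 - r.1) < a + N - 1; have := r.2; omega), mul_zero]
        · have : v r' = 0 := by
            refine ih r' h1 ?_
            rcases eq_or_lt_of_le h2 with h3 | h3
            · exact absurd (Fin.ext h3.symm) hne
            · omega
          rw [this, zero_mul]
      have hM : M r c ≠ 0 := hD r c har (by show r.1 + (a + N - 1 - r.1) = a + N - 1; have := r.2; omega)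
      exact (mul_eq_zero.mp hone).resolve_right hM
  apply hv0
  funext r
  rcases lt_or_ge r.1 a with h | h
  · have := congrFun hw0 ⟨r.1, h⟩
    simpa [hwdef] using this
  · exact hbot N r h (by omega)

section RankLemma

variable {F : Type} [Field F]

lemma hankel_rank (ρ₁ n₁ n₂ k p : ℕ) (α : ℕ → F) (x : Fin ρ₁ → F)
    (hdetρ : (hankel F ρ₁ ρ₁ α).det ≠ 0)
    (hρn : ρ₁ + 1 ≤ n₁) (h12 : n₁ ≤ n₂) (h21 : n₂ ≤ n₁ + 1)
    (hkn₁ : ρ₁ + n₁ ≤ k) (hkp : k + p = n₁ + n₂ - 1)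
    (hβ0 : ∀ s, ρ₁ ≤ s → s < k → betaSeq ρ₁ α x s = 0)
    (hβk : p ≠ 0 → betaSeq ρ₁ α x k ≠ 0) :
    (hankel F n₁ n₂ α).rank = ρ₁ + p := by
  have hpn : ρ₁ + p ≤ n₁ := by omega
  set β := betaSeq ρ₁ α x with hβdef
  set H' : Matrix (Fin n₁) (Fin n₂) F :=
    Matrix.of (fun i j => if i.1 < ρ₁ then α (i.1 + j.1) else β (i.1 + j.1)) with hH'def
  have hEH : elimMat F ρ₁ n₁ x * hankel F n₁ n₂ α = H' := elim_mul F ρ₁ n₁ n₂ x α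
  have hrankH : (hankel F n₁ n₂ α).rank = H'.rank := by
    rw [← hEH, Matrix.rank_mul_eq_right_of_isUnit_det _ _
      (by rw [elimMat_det]; exact isUnit_one)]
  have hgpf : ∀ r : Fin (ρ₁ + p), (if r.1 < ρ₁ then r.1 else n₁ - p + (r.1 - ρ₁)) < n₁ := by
    intro r; have := r.2; split <;> omega
  set g : Fin (ρ₁ + p) → Fin n₁ := fun r => ⟨_, hgpf r⟩ with hgdef
  have hgval : ∀ r : Fin (ρ₁ + p), (g r).1 = if r.1 < ρ₁ then r.1 else n₁ - p + (r.1 - ρ₁) :=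
    fun r => rfl
  have hhpf : ∀ c : Fin (ρ₁ + p), (if c.1 < ρ₁ then c.1 else k - n₁ + 1 + (c.1 - ρ₁)) < n₂ := by
    intro c; have := c.2; split <;> omega
  set h : Fin (ρ₁ + p) → Fin n₂ := fun c => ⟨_, hhpf c⟩ with hhdef
  have hhval : ∀ c : Fin (ρ₁ + p), (h c).1 = if c.1 < ρ₁ then c.1 else k - n₁ + 1 + (c.1 - ρ₁) :=
    fun c => rfl
  -- H' entries
  have hH'top : ∀ (i : Fin n₁) (j : Fin n₂), i.1 < ρ₁ → H' i j = α (i.1 + j.1) := by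
    intro i j hi; show (if i.1 < ρ₁ then _ else _) = _; rw [if_pos hi]
  have hH'bot : ∀ (i : Fin n₁) (j : Fin n₂), ρ₁ ≤ i.1 → H' i j = β (i.1 + j.1) := by
    intro i j hi; show (if i.1 < ρ₁ then _ else _) = _; rw [if_neg (by omega)]
  -- upper bound
  set D : Matrix (Fin (ρ₁ + p)) (Fin n₂) F := Matrix.of (fun r j => H' (g r) j) with hDdef
  set C : Matrix (Fin n₁) (Fin (ρ₁ + p)) F :=
    Matrix.of (fun i r => if g r = i then (1 : F) else 0) with hCdef
  have hCap : ∀ i r, C i r = if g r = i then (1 : F) else 0 := fun i r => rfl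
  have hDap : ∀ r j, D r j = H' (g r) j := fun r j => rfl
  have hCD : C * D = H' := by
    ext i j
    rw [Matrix.mul_apply]
    rcases lt_or_ge i.1 ρ₁ with hi | hi
    · have hr0 : i.1 < ρ₁ + p := by omega
      rw [Finset.sum_eq_single_of_mem (f := fun r => C i r * D r j) ⟨i.1, hr0⟩
        (Finset.mem_univ _) ?_]
      · have hgi : g ⟨i.1, hr0⟩ = i := by
          refine Fin.ext ?_; rw [hgval]; simp only [Fin.val_mk]; rw [if_pos hi]
        rw [hCap, hDap, hgi, if_pos rfl, one_mul]
      · intro r _ hne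
        show C i r * D r j = 0
        rw [hCap, if_neg, zero_mul]
        intro hgr
        apply hne
        refine Fin.ext ?_
        have hval := congrArg Fin.val hgr
        rw [hgval] at hval
        simp only [Fin.val_mk] at hval ⊢
        have := r.2
        split at hval <;> omega
    rcases lt_or_ge i.1 (n₁ - p) with hi2 | hi2
    · rw [Finset.sum_eq_zero, hH'bot i j hi, hβ0 _ (by omega) (by have := i.2; have := j.2; omega)]
      intro r _
      show C i r * D r j = 0
      rw [hCap, if_neg, zero_mul]
      intro hgr
      have hval := congrArg Fin.val hgr
      rw [hgval] at hval
      have := r.2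
      split at hval <;> omega
    · have hr0 : ρ₁ + (i.1 - (n₁ - p)) < ρ₁ + p := by have := i.2; omega
      rw [Finset.sum_eq_single_of_mem (f := fun r => C i r * D r j) ⟨ρ₁ + (i.1 - (n₁ - p)), hr0⟩
        (Finset.mem_univ _) ?_]
      · have hgi : g ⟨ρ₁ + (i.1 - (n₁ - p)), hr0⟩ = i := by
          refine Fin.ext ?_; rw [hgval]; simp only [Fin.val_mk]
          rw [if_neg (by omega)]; omega
        rw [hCap, hDap, hgi, if_pos rfl, one_mul]
      · intro r _ hne
        show C i r * D r j = 0
        rw [hCap, if_neg, zero_mul]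
        intro hgr
        apply hne
        refine Fin.ext ?_
        have hval := congrArg Fin.val hgr
        rw [hgval] at hval
        simp only [Fin.val_mk] at hval ⊢
        have := r.2
        split at hval <;> omega
  have hup : H'.rank ≤ ρ₁ + p := by
    rw [← hCD]
    exact le_trans (Matrix.rank_mul_le_right C D)
      (le_trans (Matrix.rank_le_card_height D) (by simp))
  -- lower bound
  set S : Matrix (Fin (ρ₁ + p)) (Fin (ρ₁ + p)) F :=
    Matrix.of (fun r c => H' (g r) (h c)) with hSdef
  have hSap : ∀ r c, S r c = H' (g r) (h c) := fun r c => rfl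
  set P : Matrix (Fin (ρ₁ + p)) (Fin n₁) F :=
    Matrix.of (fun r i => if g r = i then (1 : F) else 0) with hPdef
  set Q : Matrix (Fin n₂) (Fin (ρ₁ + p)) F :=
    Matrix.of (fun j c => if h c = j then (1 : F) else 0) with hQdef
  have hPap : ∀ r i, P r i = if g r = i then (1 : F) else 0 := fun r i => rfl
  have hQap : ∀ j c, Q j c = if h c = j then (1 : F) else 0 := fun j c => rfl
  have hPH : ∀ r j, (P * H') r j = H' (g r) j := by
    intro r j
    rw [Matrix.mul_apply]
    rw [Finset.sum_eq_single_of_mem (f := fun i => P r i * H' i j) (g r) (Finset.mem_univ _) ?_]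
    · rw [hPap, if_pos rfl, one_mul]
    · intro i _ hne
      show P r i * H' i j = 0
      rw [hPap, if_neg (fun he => hne he.symm), zero_mul]
  have hPQ : P * H' * Q = S := by
    ext r c
    rw [Matrix.mul_apply]
    rw [Finset.sum_eq_single_of_mem (f := fun j => (P * H') r j * Q j c) (h c)
      (Finset.mem_univ _) ?_]
    · rw [hQap, if_pos rfl, mul_one, hPH, hSap]
    · intro j _ hne
      show (P * H') r j * Q j c = 0
      rw [hQap, if_neg (fun he => hne he.symm), mul_zero]
  have hdetS : S.det ≠ 0 := by
    refine det_echelon S (Nat.le_add_right ρ₁ p) ?_ ?_ ?_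
    · have hTeq : (Matrix.of fun i j : Fin ρ₁ =>
          S ⟨i.1, lt_of_lt_of_le i.2 (Nat.le_add_right ρ₁ p)⟩
            ⟨j.1, lt_of_lt_of_le j.2 (Nat.le_add_right ρ₁ p)⟩) = hankel F ρ₁ ρ₁ α := by
        ext i j
        show S _ _ = α (i.1 + j.1)
        rw [hSap]
        have hg1 : (g ⟨i.1, lt_of_lt_of_le i.2 (Nat.le_add_right ρ₁ p)⟩).1 = i.1 := by
          rw [hgval]; simp only [Fin.val_mk]; rw [if_pos i.2]
        have hh1 : (h ⟨j.1, lt_of_lt_of_le j.2 (Nat.le_add_right ρ₁ p)⟩).1 = j.1 := by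
          rw [hhval]; simp only [Fin.val_mk]; rw [if_pos j.2]
        rw [hH'top _ _ (by rw [hg1]; exact i.2), hg1, hh1]
      rw [hTeq]; exact hdetρ
    · intro r c hr hlt
      rw [hSap, hH'bot _ _ (by rw [hgval]; have := r.2; split <;> omega)]
      refine hβ0 _ ?_ ?_
      · rw [hgval, hhval]; have := r.2; have := c.2; split <;> split <;> omega
      · rw [hgval, hhval]; have := r.2; have := c.2; split <;> split <;> omega
    · intro r c hr heq
      rw [hSap, hH'bot _ _ (by rw [hgval]; have := r.2; split <;> omega)]
      have hidx : (g r).1 + (h c).1 = k := by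
        rw [hgval, hhval]; have := r.2; have := c.2; split <;> split <;> omega
      rw [hidx]
      exact hβk (by have := r.2; omega)
  have hSrank : S.rank = ρ₁ + p := by
    rw [Matrix.rank_of_isUnit S ((Matrix.isUnit_iff_isUnit_det S).mpr
      (isUnit_iff_ne_zero.mpr hdetS)), Fintype.card_fin]
  have hlow : ρ₁ + p ≤ H'.rank := by
    rw [← hSrank, ← hPQ]
    exact le_trans (Matrix.rank_mul_le_left (P * H') Q) (Matrix.rank_mul_le_right P H')
  rw [hrankH]
  exact le_antisymm hup hlow

end RankLemma

/-- the `(ρ,π)`-form. Applying the row operations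
`Rᵢ → Rᵢ - x₀ R_{i-ρ₁} - ⋯ - x_{ρ₁-1} R_{i-1}` (for rows `i > ρ₁`) to `H_{l,m}(α)` leaves
the top `ρ₁` rows as the Hankel matrix `H_{ρ₁,m}(α)` and turns the bottom `l - ρ₁` rows into
a Hankel matrix `H_{l-ρ₁,m}(β)` with `βᵢ = 0` for `i < (n+1) - π(α)` and
`β_{(n+1)-π(α)} ≠ 0`; moreover `β` is independent of `l` and `m`. -/
theorem stmt_2 (F : Type) [Field F] [Fintype F] (n ρ₁ : ℕ) (α : ℕ → F)
    (hρ : rhoC F n α = ρ₁) (hρ1 : 1 ≤ ρ₁) (hρ2 : ρ₁ + 1 ≤ (n + 2) / 2)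
    (x : Fin ρ₁ → F)
    (hx : (hankel F ρ₁ ρ₁ α).mulVec x = fun i : Fin ρ₁ => α (ρ₁ + i.1)) :
    ∃ β : ℕ → F,
      (∀ i : ℕ, ρ₁ ≤ i → i ≤ n → i < n + 1 - piC F n α → β i = 0) ∧
      (∀ i : ℕ, i ≤ n → i = n + 1 - piC F n α → β i ≠ 0) ∧
      (∀ l m : ℕ, l + m = n + 2 → ρ₁ < l →
        (∀ (i : Fin l) (j : Fin m) (hi : i.1 < ρ₁),
          hankel F l m α i j = hankel F ρ₁ m α ⟨i.1, hi⟩ j) ∧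
        (∀ (i : Fin l) (j : Fin m) (hi : ρ₁ ≤ i.1),
          hankel F l m α i j -
            ∑ t : Fin ρ₁, x t * hankel F l m α
              ⟨i.1 - ρ₁ + t.1, by have h1 := i.isLt; have h2 := t.isLt; omega⟩ j =
          β (i.1 + j.1))) := by
  classical
  set β := betaSeq ρ₁ α x with hβdef
  -- basic facts from the sSup definition of rhoC
  have hρ' : sSup {l | l ≤ (n + 2) / 2 ∧ (hankel F l l α).det ≠ 0} = ρ₁ := hρ
  have hbdd : BddAbove {l | l ≤ (n + 2) / 2 ∧ (hankel F l l α).det ≠ 0} :=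
    ⟨(n + 2) / 2, fun l hl => hl.1⟩
  have hne : {l | l ≤ (n + 2) / 2 ∧ (hankel F l l α).det ≠ 0}.Nonempty := by
    by_contra hcon
    rw [Set.not_nonempty_iff_eq_empty] at hcon
    rw [hcon, csSup_empty, show (⊥:ℕ) = 0 from rfl] at hρ'
    omega
  have hmem := Nat.sSup_mem hne hbdd
  rw [hρ'] at hmem
  have hdetρ : (hankel F ρ₁ ρ₁ α).det ≠ 0 := hmem.2
  have hmax : ∀ l, l ≤ (n + 2) / 2 → (hankel F l l α).det ≠ 0 → l ≤ ρ₁ :=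
    fun l h1 h2 => hρ' ▸ le_csSup hbdd ⟨h1, h2⟩
  -- β vanishes on [ρ₁, 2ρ₁)
  have hβlow : ∀ s, ρ₁ ≤ s → s < 2 * ρ₁ → β s = 0 := by
    intro s h1 h2
    have hxi := congrFun hx ⟨s - ρ₁, by omega⟩
    simp only [Matrix.mulVec, dotProduct, hankel, Matrix.of_apply] at hxi
    show α s - ∑ t : Fin ρ₁, x t * α (s - ρ₁ + t.1) = 0
    rw [sub_eq_zero, show α s = α (ρ₁ + (s - ρ₁)) from by rw [Nat.add_sub_cancel' h1], ← hxi]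
    exact Finset.sum_congr rfl fun t _ => mul_comm _ _
  -- find the first nonvanishing index k of β (or n+1 if none)
  obtain ⟨k, hkle, hkn₁, hβ0, hβk⟩ :
      ∃ k, k ≤ n + 1 ∧ ρ₁ + (n + 2) / 2 ≤ k ∧
        (∀ s, ρ₁ ≤ s → s < k → β s = 0) ∧ (k ≤ n → β k ≠ 0) := by
    by_cases hK : ∃ s, ρ₁ ≤ s ∧ s ≤ n ∧ β s ≠ 0
    · set k := sInf {s | ρ₁ ≤ s ∧ s ≤ n ∧ β s ≠ 0} with hkdef
      have hKmem : k ∈ {s | ρ₁ ≤ s ∧ s ≤ n ∧ β s ≠ 0} := Nat.sInf_mem hK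
      obtain ⟨hk1, hk2, hk3⟩ := hKmem
      have hβ0 : ∀ s, ρ₁ ≤ s → s < k → β s = 0 := by
        intro s hs1 hs2
        by_contra hβs
        exact absurd (Nat.sInf_le (show s ∈ {s | ρ₁ ≤ s ∧ s ≤ n ∧ β s ≠ 0} from ⟨hs1, by omega, hβs⟩)) (by omega)
      have hk2ρ : 2 * ρ₁ ≤ k := by
        by_contra hcon
        exact hk3 (hβlow k hk1 (by omega))
      refine ⟨k, by omega, ?_, hβ0, fun _ => hk3⟩
      -- key step: the (k+1-ρ₁) × (k+1-ρ₁) Hankel determinant is nonzero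
      by_contra hcon
      set l := k + 1 - ρ₁ with hldef
      have hdetl : (hankel F l l α).det ≠ 0 := by
        have hdet2 : (elimMat F ρ₁ l x * hankel F l l α).det ≠ 0 := by
          rw [elim_mul F ρ₁ l l x α]
          refine det_echelon _ (show ρ₁ ≤ l by omega) ?_ ?_ ?_
          · have heq : (Matrix.of fun i j : Fin ρ₁ =>
                (Matrix.of (fun (i : Fin l) (j : Fin l) =>
                  if i.1 < ρ₁ then α (i.1 + j.1) else betaSeq ρ₁ α x (i.1 + j.1)))
                  ⟨i.1, lt_of_lt_of_le i.2 (show ρ₁ ≤ l by omega)⟩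
                  ⟨j.1, lt_of_lt_of_le j.2 (show ρ₁ ≤ l by omega)⟩) = hankel F ρ₁ ρ₁ α := by
              ext i j
              show (if i.1 < ρ₁ then α (i.1 + j.1) else betaSeq ρ₁ α x (i.1 + j.1)) = α (i.1 + j.1)
              rw [if_pos i.2]
            rw [heq]
            exact hdetρ
          · intro r c hr hlt
            show (if r.1 < ρ₁ then α (r.1 + c.1) else betaSeq ρ₁ α x (r.1 + c.1)) = 0
            rw [if_neg (by omega)]
            exact hβ0 _ (by omega) (by omega)
          · intro r c hr heq
            show (if r.1 < ρ₁ then α (r.1 + c.1) else betaSeq ρ₁ α x (r.1 + c.1)) ≠ 0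
            rw [if_neg (by omega), show r.1 + c.1 = k from by omega]
            exact hk3
        rw [Matrix.det_mul, elimMat_det, one_mul] at hdet2
        exact hdet2
      have := hmax l (by omega) hdetl
      omega
    · push_neg at hK
      refine ⟨n + 1, le_refl _, by omega, ?_, by omega⟩
      intro s hs1 hs2
      by_contra hβs
      exact hβs (hK s hs1 (by omega))
  -- the rank of the big Hankel matrix
  set p := n + 1 - k with hpdef
  have hrank : (hankel F ((n + 2) / 2) ((n + 3) / 2) α).rank = ρ₁ + p := by
    refine hankel_rank ρ₁ ((n + 2) / 2) ((n + 3) / 2) k p α x hdetρ hρ2 (by omega) (by omega)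
      hkn₁ (by omega) hβ0 ?_
    intro hp0
    exact hβk (by omega)
  have hπ : piC F n α = p := by
    rw [piC, hrank, hρ]
    omega
  refine ⟨β, ?_, ?_, ?_⟩
  · intro i h1 h2 h3
    rw [hπ] at h3
    exact hβ0 i h1 (by omega)
  · intro i h1 h2
    rw [hπ] at h2
    rw [show i = k from by omega]
    exact hβk (by omega)
  · intro l m hlm hρl
    constructor
    · intro i j hi
      rfl
    · intro i j hi
      show α (i.1 + j.1) - ∑ t : Fin ρ₁, x t * α (i.1 - ρ₁ + t.1 + j.1) = β (i.1 + j.1)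
      show _ = α (i.1 + j.1) - ∑ t : Fin ρ₁, x t * α (i.1 + j.1 - ρ₁ + t.1)
      congr 1
      exact Finset.sum_congr rfl fun t _ => by
        rw [show i.1 - ρ₁ + t.1 + j.1 = i.1 + j.1 - ρ₁ + t.1 from by omega]
end

section
/- Let q be a prime power, α ∈ F_q^{n+1} with rank H_{n₁,n₂}(α) = r (where n₁ = ⌊(n+2)/2⌋, n₂ = ⌊(n+3)/2⌋), and let l,m ≥ 1 with l+m-2 = n. Then rank H_{l,m}(α) = r if min{l,m} ≥ r, and rank H_{l,m}(α) = min{l,m} if min{l,m} < r. -/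
open Matrix Polynomial

/-! Along an anti-diagonal `l + m = N`, if `H_{l+1,m} v = 0` then both `(v, 0)` and `(0, v)` lie
in the kernel of `H_{l,m+1}`. For `v` in the kernel whose nonzero coordinates reach furthest to
the right, `(0, v)` is not of the form `(w, 0)`, so a nonzero kernel grows strictly:
`rank H_{l,m+1} ≤ rank H_{l+1,m}` whenever `H_{l+1,m}` has a nontrivial kernel. Walking outwards
from the central matrix `H_{n₁,n₂}` of rank `r` (and using `H_{l,m}ᵀ = H_{m,l}`) gives
`rank H_{l,m} ≥ min l r`, and `≤ r` as long as `r < n₂`; hence `rank H_{l,m} = min (min l m) r`. -/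

section KernelShift

variable {K : Type*} [DivisionRing K] {m : ℕ}

theorem finrank_lt_of_map_extendByZero_castSucc_le_of_map_extendByZero_succ_le
    {V : Submodule K (Fin m → K)} {W : Submodule K (Fin (m + 1) → K)} (hV : V ≠ ⊥)
    (hcastSucc : V.map (Function.ExtendByZero.linearMap K Fin.castSucc) ≤ W)
    (hsucc : V.map (Function.ExtendByZero.linearMap K Fin.succ) ≤ W) :
    Module.finrank K V < Module.finrank K W := by
  classical
  set T := Finset.univ.filter fun j : Fin m => ∃ v ∈ V, v j ≠ 0
  obtain ⟨v, hvV, hv⟩ := Submodule.exists_mem_ne_zero_of_ne_bot hV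
  obtain ⟨j, hj⟩ := Function.ne_iff.mp hv
  obtain ⟨j₀, hj₀T, hj₀max⟩ := T.exists_max_image id ⟨j, by simpa [T] using ⟨v, hvV, hj⟩⟩
  obtain ⟨v₀, hv₀V, hv₀⟩ : ∃ v ∈ V, v j₀ ≠ 0 := by simpa [T] using hj₀T
  have hvanish :
      ∀ w ∈ V.map (Function.ExtendByZero.linearMap K Fin.castSucc), w j₀.succ = 0 := by
    rintro _ ⟨w, hwV, rfl⟩
    by_cases hpre : ∃ a, Fin.castSucc a = j₀.succ
    · obtain ⟨a, ha⟩ := hpre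
      rw [← ha, Function.ExtendByZero.linearMap_apply, (Fin.castSucc_injective m).extend_apply]
      by_contra hwa
      have hle : a ≤ j₀ := hj₀max a (by simpa [T] using ⟨w, hwV, hwa⟩)
      have hval : (a : ℕ) = j₀ + 1 := by simpa [Fin.ext_iff] using ha
      exact absurd (Fin.le_def.mp hle) (by omega)
    · simp [Function.extend_apply' _ _ _ hpre]
  have hlt : V.map (Function.ExtendByZero.linearMap K Fin.castSucc) < W := by
    refine lt_of_le_of_ne hcastSucc fun heq => hv₀ ?_
    have h := hvanish _ (heq ▸ hsucc ⟨v₀, hv₀V, rfl⟩)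
    rwa [Function.ExtendByZero.linearMap_apply, (Fin.succ_injective m).extend_apply] at h
  calc Module.finrank K V
      = Module.finrank K (V.map (Function.ExtendByZero.linearMap K Fin.castSucc)) :=
        LinearEquiv.finrank_eq <| Submodule.equivMapOfInjective _
          (Function.extend_injective (Fin.castSucc_injective _) 0) V
    _ < Module.finrank K W := Submodule.finrank_lt_finrank_of_lt hlt

end KernelShift

theorem Matrix.rank_add_finrank_ker_mulVecLin {K ι κ : Type*} [Field K] [Fintype κ]
    (A : Matrix ι κ K) :
    A.rank + Module.finrank K (LinearMap.ker A.mulVecLin) = Fintype.card κ :=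
  A.mulVecLin.finrank_range_add_finrank_ker.trans (Module.finrank_fintype_fun_eq_card K)

section Hankel

variable {F : Type} [Field F] (α : ℕ → F)

theorem hankel_transpose (l m : ℕ) : (hankel F l m α)ᵀ = hankel F m l α := by
  ext i j
  simp [hankel, add_comm]

theorem rank_hankel_comm (l m : ℕ) : (hankel F l m α).rank = (hankel F m l α).rank := by
  rw [← hankel_transpose, Matrix.rank_transpose]

theorem map_ker_hankel_extendByZero_castSucc_le (l m : ℕ) :
    (LinearMap.ker (hankel F (l + 1) m α).mulVecLin).map
        (Function.ExtendByZero.linearMap F Fin.castSucc) ≤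
      LinearMap.ker (hankel F l (m + 1) α).mulVecLin := by
  rintro _ ⟨v, hv, rfl⟩
  funext i
  have hi := congrFun hv i.castSucc
  simpa [mulVec, dotProduct, hankel, Fin.sum_univ_castSucc,
    (Fin.castSucc_injective m).extend_apply] using hi

theorem map_ker_hankel_extendByZero_succ_le (l m : ℕ) :
    (LinearMap.ker (hankel F (l + 1) m α).mulVecLin).map
        (Function.ExtendByZero.linearMap F Fin.succ) ≤
      LinearMap.ker (hankel F l (m + 1) α).mulVecLin := by
  rintro _ ⟨v, hv, rfl⟩
  funext i
  have hi := congrFun hv i.succ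
  simpa [mulVec, dotProduct, hankel, Fin.sum_univ_succ, (Fin.succ_injective m).extend_apply,
    add_assoc, add_comm 1] using hi

theorem rank_hankel_le_of_rank_lt_width {l m : ℕ} (h : (hankel F (l + 1) m α).rank < m) :
    (hankel F l (m + 1) α).rank ≤ (hankel F (l + 1) m α).rank := by
  have hdim := (hankel F (l + 1) m α).rank_add_finrank_ker_mulVecLin
  have hdim' := (hankel F l (m + 1) α).rank_add_finrank_ker_mulVecLin
  have hker : LinearMap.ker (hankel F (l + 1) m α).mulVecLin ≠ ⊥ := by
    intro hbot
    rw [hbot, finrank_bot, Fintype.card_fin] at hdim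
    omega
  have hlt := finrank_lt_of_map_extendByZero_castSucc_le_of_map_extendByZero_succ_le hker
    (map_ker_hankel_extendByZero_castSucc_le α l m) (map_ker_hankel_extendByZero_succ_le α l m)
  rw [Fintype.card_fin] at hdim hdim'
  omega

theorem rank_hankel_le_of_rank_lt_height {l m : ℕ} (h : (hankel F l (m + 1) α).rank < l) :
    (hankel F (l + 1) m α).rank ≤ (hankel F l (m + 1) α).rank := by
  rw [rank_hankel_comm α l, rank_hankel_comm α (l + 1)] at *
  exact rank_hankel_le_of_rank_lt_width α h

variable {k₀ m₀ k m : ℕ}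

theorem min_le_rank_hankel (hk : k ≤ k₀) (hkm : k + m = k₀ + m₀) :
    min k (hankel F k₀ m₀ α).rank ≤ (hankel F k m α).rank := by
  induction hk using Nat.decreasingInduction generalizing m with
  | self => rw [show m = m₀ by omega]; exact min_le_right _ _
  | of_succ k hk ih =>
    obtain ⟨m, rfl⟩ : ∃ m', m = m' + 1 := ⟨m - 1, by omega⟩
    have hsucc := ih (m := m) (by omega)
    by_contra! hlt
    have := rank_hankel_le_of_rank_lt_height α (hlt.trans_le (min_le_left _ _))
    omega

theorem rank_hankel_le_of_rank_lt (hr : (hankel F k₀ m₀ α).rank < m₀) (hk : k ≤ k₀)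
    (hkm : k + m = k₀ + m₀) : (hankel F k m α).rank ≤ (hankel F k₀ m₀ α).rank := by
  induction hk using Nat.decreasingInduction generalizing m with
  | self => rw [show m = m₀ by omega]
  | of_succ k hk ih =>
    obtain ⟨m, rfl⟩ : ∃ m', m = m' + 1 := ⟨m - 1, by omega⟩
    have hsucc := ih (m := m) (by omega)
    exact (rank_hankel_le_of_rank_lt_width α (by omega)).trans hsucc

theorem rank_hankel_eq_min (h₀ : k₀ ≤ m₀) (hk : k ≤ k₀) (hkm : k + m = k₀ + m₀) :
    (hankel F k m α).rank = min k (hankel F k₀ m₀ α).rank := by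
  have hlower := min_le_rank_hankel α hk hkm
  have hheight := (hankel F k m α).rank_le_height
  have hheight₀ := (hankel F k₀ m₀ α).rank_le_height
  by_cases hr : (hankel F k₀ m₀ α).rank < m₀
  · have := rank_hankel_le_of_rank_lt α hr hk hkm
    omega
  · omega

end Hankel

theorem stmt_3_general (F : Type) [Field F] (n l m r : ℕ) (α : ℕ → F)
    (hlm : l + m = n + 2)
    (hr : (hankel F ((n + 2) / 2) ((n + 3) / 2) α).rank = r) :
    (r ≤ min l m → (hankel F l m α).rank = r) ∧
    (min l m < r → (hankel F l m α).rank = min l m) := by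
  have hrank : (hankel F l m α).rank = min (min l m) r := by
    subst hr
    rcases le_or_gt l ((n + 2) / 2) with hl | hl
    · rw [rank_hankel_eq_min α (m₀ := (n + 3) / 2) (by omega) hl (by omega)]
      omega
    · rw [rank_hankel_comm, rank_hankel_eq_min α (m₀ := (n + 3) / 2) (by omega)
        (show m ≤ (n + 2) / 2 by omega) (by omega)]
      omega
  constructor <;> intro h <;> omega

/-- if `rank H_{n₁,n₂}(α) = r` and `l+m-2 = n`, then
`rank H_{l,m}(α) = r` when `min{l,m} ≥ r` and `rank H_{l,m}(α) = min{l,m}` otherwise. -/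
theorem stmt_3 (F : Type) [Field F] [Fintype F] (n l m r : ℕ) (α : ℕ → F)
    (hl : 1 ≤ l) (hm : 1 ≤ m) (hlm : l + m = n + 2)
    (hr : (hankel F ((n + 2) / 2) ((n + 3) / 2) α).rank = r) :
    (r ≤ min l m → (hankel F l m α).rank = r) ∧
    (min l m < r → (hankel F l m α).rank = min l m) :=
  stmt_3_general F n l m r α hlm hr
end

section
/- Let q be a prime power, α ∈ F_q^{n+1}, and l,m,k integers with l+m-2 = n and l > k ≥ 1. A vector v = (v₀,...,v_{m-1})ᵀ lies in ker H_{l,m}(α) if and only if both (v₀,...,v_{m-1},0)ᵀ and (0,v₀,...,v_{m-1})ᵀ lie in ker H_{l-1,m+1}(α). Consequently, identifying vectors with polynomials via (v₀,...,v_{m-1}) ↔ v₀ + v₁T + ... + v_{m-1}T^{m-1}, a polynomial A with deg A ≤ m-1 lies in ker H_{l,m}(α) if and only if Y·A lies in ker H_{l-k,m+k}(α) for every polynomial Y with deg Y ≤ k. -/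
open Matrix Polynomial

lemma hankel_mulVec_poly (F : Type) [Field F] (l m : ℕ) (α : ℕ → F) (A : Polynomial F)
    (i : Fin l) :
    (hankel F l m α).mulVec (fun j : Fin m => A.coeff (j : ℕ)) i
      = ∑ t ∈ Finset.range m, α (i.1 + t) * A.coeff t := by
  simp only [hankel, Matrix.mulVec, dotProduct, Matrix.of_apply]
  exact Fin.sum_univ_eq_sum_range (fun t => α (i.1 + t) * A.coeff t) m

lemma shift_sum (F : Type) [Field F] (m k s : ℕ) (α : ℕ → F) (A : Polynomial F)
    (hA : ∀ t, m ≤ t → A.coeff t = 0) (hs : s ≤ k) (p : ℕ) :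
    ∑ j ∈ Finset.range (m + k), α (p + j) * (X ^ s * A).coeff j
      = ∑ t ∈ Finset.range m, α (p + s + t) * A.coeff t := by
  have hXs : ∀ j, (X ^ s * A).coeff j = if s ≤ j then A.coeff (j - s) else 0 := by
    intro j; rw [mul_comm, Polynomial.coeff_mul_X_pow']
  have h1 : ∑ j ∈ Finset.range (m + k), α (p + j) * (X ^ s * A).coeff j
      = ∑ j ∈ Finset.range (s + m), α (p + j) * (X ^ s * A).coeff j := by
    refine (Finset.sum_subset ?_ ?_).symm
    · exact Finset.range_subset_range.2 (by omega)
    · intro j _ hj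
      rw [Finset.mem_range, not_lt] at hj
      rw [hXs]
      rcases le_or_gt s j with h | h
      · rw [if_pos h, hA _ (by omega), mul_zero]
      · rw [if_neg (by omega), mul_zero]
  rw [h1, Finset.sum_range_add]
  have h2 : ∑ j ∈ Finset.range s, α (p + j) * (X ^ s * A).coeff j = 0 := by
    refine Finset.sum_eq_zero fun j hj => ?_
    rw [Finset.mem_range] at hj
    rw [hXs, if_neg (by omega), mul_zero]
  rw [h2, zero_add]
  refine Finset.sum_congr rfl fun t _ => ?_
  rw [hXs, if_pos (by omega)]
  congr 2 <;> omega

/-- `v ∈ ker H_{l,m}(α)` iff both `(v,0)` and `(0,v)` lie in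
`ker H_{l-1,m+1}(α)`; consequently, a polynomial `A` of degree `≤ m-1` lies in
`ker H_{l,m}(α)` iff `Y·A` lies in `ker H_{l-k,m+k}(α)` for every `Y` with `deg Y ≤ k`. -/
theorem stmt_5 (F : Type) [Field F] [Fintype F] (n l m k : ℕ) (α : ℕ → F)
    (hlm : l + m = n + 2) (hk : 1 ≤ k) (hkl : k < l) :
    (∀ v : Fin m → F,
      (hankel F l m α).mulVec v = 0 ↔
        ((hankel F (l - 1) (m + 1) α).mulVec (Fin.snoc v 0) = 0 ∧
         (hankel F (l - 1) (m + 1) α).mulVec (Fin.cons 0 v) = 0)) ∧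
    (∀ A : Polynomial F, A.degree < (m : WithBot ℕ) →
      ((hankel F l m α).mulVec (fun i : Fin m => A.coeff (i : ℕ)) = 0 ↔
        ∀ Y : Polynomial F, Y.degree ≤ (k : WithBot ℕ) →
          (hankel F (l - k) (m + k) α).mulVec
            (fun i : Fin (m + k) => (Y * A).coeff (i : ℕ)) = 0)) := by
  have hl2 : 2 ≤ l := by omega
  constructor
  · -- Part 1
    intro v
    have hsnoc : ∀ i : Fin (l - 1),
        (hankel F (l - 1) (m + 1) α).mulVec (Fin.snoc v 0) i
          = (hankel F l m α).mulVec v ⟨i.1, by omega⟩ := by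
      intro i
      simp only [hankel, Matrix.mulVec, dotProduct, Matrix.of_apply]
      rw [Fin.sum_univ_castSucc]
      simp [Fin.snoc_castSucc]
    have hcons : ∀ i : Fin (l - 1),
        (hankel F (l - 1) (m + 1) α).mulVec (Fin.cons 0 v) i
          = (hankel F l m α).mulVec v ⟨i.1 + 1, by have := i.2; omega⟩ := by
      intro i
      simp only [hankel, Matrix.mulVec, dotProduct, Matrix.of_apply]
      rw [Fin.sum_univ_succ]
      simp only [Fin.cons_zero, mul_zero, Fin.cons_succ, zero_add, Fin.val_succ]
      refine Finset.sum_congr rfl fun j _ => ?_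
      congr 2
      omega
    constructor
    · intro h
      constructor <;> funext i
      · rw [hsnoc, h]; rfl
      · rw [hcons, h]; rfl
    · rintro ⟨h1, h2⟩
      funext i
      rcases lt_or_ge i.1 (l - 1) with hi | hi
      · have := congrFun h1 ⟨i.1, by omega⟩
        rw [hsnoc] at this
        simpa using this
      · have hi' : i.1 = l - 1 := by omega
        have := congrFun h2 ⟨i.1 - 1, by omega⟩
        rw [hcons] at this
        have he : (⟨i.1 - 1 + 1, by omega⟩ : Fin l) = i := by
          apply Fin.ext; show i.1 - 1 + 1 = i.1; omega
        rw [he] at this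
        simpa using this
  · -- Part 2
    intro A hA
    have hAc : ∀ t, m ≤ t → A.coeff t = 0 := fun t ht =>
      Polynomial.coeff_eq_zero_of_degree_lt (lt_of_lt_of_le hA (by exact_mod_cast Nat.cast_le.2 ht))
    have hSA : ∀ i : Fin l, (hankel F l m α).mulVec (fun j : Fin m => A.coeff (j : ℕ)) i
        = ∑ t ∈ Finset.range m, α (i.1 + t) * A.coeff t := fun i => hankel_mulVec_poly F l m α A i
    constructor
    · intro h Y hY
      have hker : ∀ p, p < l → ∑ t ∈ Finset.range m, α (p + t) * A.coeff t = 0 := by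
        intro p hp
        have := congrFun h ⟨p, hp⟩
        rw [hSA] at this
        simpa using this
      funext i
      rw [hankel_mulVec_poly]
      have hYnd : Y.natDegree < k + 1 := by
        have := Polynomial.natDegree_le_iff_degree_le.2 hY
        omega
      have hYsum : Y * A = ∑ s ∈ Finset.range (k + 1), C (Y.coeff s) * (X ^ s * A) := by
        conv_lhs => rw [Polynomial.as_sum_range' Y (k + 1) hYnd]
        rw [Finset.sum_mul]
        refine Finset.sum_congr rfl fun s _ => ?_
        rw [← Polynomial.C_mul_X_pow_eq_monomial]
        ring
      have : ∑ j ∈ Finset.range (m + k), α (i.1 + j) * (Y * A).coeff j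
          = ∑ s ∈ Finset.range (k + 1), Y.coeff s *
              ∑ j ∈ Finset.range (m + k), α (i.1 + j) * (X ^ s * A).coeff j := by
        rw [hYsum]
        simp only [Polynomial.finset_sum_coeff, Polynomial.coeff_C_mul, Finset.mul_sum]
        rw [Finset.sum_comm]
        refine Finset.sum_congr rfl fun s _ => Finset.sum_congr rfl fun j _ => by ring
      rw [this]
      refine Finset.sum_eq_zero fun s hs => ?_
      rw [Finset.mem_range] at hs
      rw [shift_sum F m k s α A hAc (by omega)]
      have : ∑ t ∈ Finset.range m, α (i.1 + s + t) * A.coeff t = 0 := by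
        refine hker _ ?_
        have : i.1 < l - k := i.2
        omega
      rw [this, mul_zero]
    · intro h
      funext i
      rw [hSA]
      set s := min i.1 k with hsdef
      have hsk : s ≤ k := Nat.min_le_right _ _
      have hik : i.1 - s < l - k := by
        rcases le_total i.1 k with hc | hc
        · have h1 : s = i.1 := min_eq_left hc
          have := i.2; omega
        · have h1 : s = k := min_eq_right hc
          have := i.2; omega
      have hXdeg : (X ^ s : Polynomial F).degree ≤ (k : WithBot ℕ) := by
        rw [Polynomial.degree_X_pow]
        exact_mod_cast Nat.cast_le.2 hsk
      have := congrFun (h (X ^ s) hXdeg) ⟨i.1 - s, hik⟩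
      rw [hankel_mulVec_poly] at this
      rw [shift_sum F m k s α A hAc hsk] at this
      have he : i.1 - s + s = i.1 := by
        have : s ≤ i.1 := Nat.min_le_left _ _
        omega
      rw [he] at this
      simpa using this
end

section
/- Let q be a prime power and n > 0, and let α ∈ F_q^{n+1} with rank H_{n₁,n₂}(α) = r and ρ(α) = ρ₁. Set c₁ = r, c₂ = n+2-r. Then there exist coprime polynomials A₁, A₂ ∈ F_q[T] with deg A₁ = ρ₁ and deg A₂ ≤ c₂ such that for every l, m with l+m-2 = n: ker H_{l,m}(α) = {0} if m ≤ c₁; ker H_{l,m}(α) = {B₁A₁ : deg B₁ ≤ m - c₁ - 1} if c₁+1 ≤ m ≤ c₂; and ker H_{l,m}(α) = {B₁A₁ + B₂A₂ : deg B₁ ≤ m - c₁ - 1, deg B₂ ≤ m - c₂ - 1} if c₂+1 ≤ m ≤ n+1, where polynomials of degree < m are identified with vectors in F_q^m. Moreover, if ρ₁ ≠ r then deg A₂ = c₂. -/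
open Matrix Polynomial

/-!
Put `S = ∑ₖ αₖ X^(n+1-k)` and `N = n + 2`. Reading the rows of `H_{l,m}(α)` as coefficients of a
product, a vector lies in the kernel iff its polynomial `V` (`deg V < m`) satisfies
`V S ≡ W (mod X^N)` for some `W` with `deg W < m`. The solutions `(V, W)` of this congruence form
a free `F[X]`-module of rank two; the extended Euclidean algorithm on `(X^N, S)`, stopped at the
middle degree, yields a basis `(A₁, W₁), (A₂, W₂)` with `deg Aᵢ, deg Wᵢ ≤ wᵢ`, `w₁ ≤ w₂`,
`w₁ + w₂ = N` and `A₁ W₂ - A₂ W₁ = γ X^N`. By Cramer's rule every solution with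
`deg V, deg W < m` is `B₁ (A₁, W₁) + B₂ (A₂, W₂)` with `deg Bᵢ < m - wᵢ`: this is the kernel
description with `c₁ = w₁`, and the kernel dimension of the near-square matrix gives `w₁ = r`.
`H_{l,l}(α)` is singular iff there is a solution with `V ≠ 0`, `deg V < l`, `deg W < N - l`;
`(A₁, W₁)` is one for `l > deg A₁`, while Cramer's rule excludes one for `l = deg A₁`, so
`ρ = deg A₁`. Finally, if `deg A₁ < w₁`, degrees in the determinant identity force `deg A₂ = w₂`.
-/

theorem WithBot.add_lt_coe_of_lt_coe_sub {x y : WithBot ℕ} {a b : ℕ} (hx : x < ↑(a - b))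
    (hy : y ≤ b) : x + y < a := by
  induction x with
  | bot => simp
  | coe x =>
    induction y with
    | bot => simp
    | coe y =>
      simp only [Nat.cast_withBot, ← WithBot.coe_add, WithBot.coe_lt_coe,
        WithBot.coe_le_coe] at *
      omega

theorem WithBot.lt_coe_sub_of_add_lt {x : WithBot ℕ} {a b : ℕ} (h : x + a < b) :
    x < ((b - a : ℕ) : WithBot ℕ) := by
  induction x with
  | bot => simp
  | coe y =>
    simp only [Nat.cast_withBot, ← WithBot.coe_add, WithBot.coe_lt_coe] at *
    omega

theorem WithBot.eq_coe_sub_of_add_eq {x : WithBot ℕ} {a b : ℕ} (h : x + a = b) :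
    x = ((b - a : ℕ) : WithBot ℕ) := by
  induction x with
  | bot => simp at h
  | coe y =>
    simp only [Nat.cast_withBot, ← WithBot.coe_add, WithBot.coe_inj] at *
    omega

section CoeffVec

variable {R : Type*} [Semiring R] {m : ℕ}

theorem Polynomial.degree_mul_lt_of_lt_coe_sub {p q : R[X]} {a b : ℕ}
    (hp : p.degree < ↑(a - b)) (hq : q.degree ≤ b) : (p * q).degree < a :=
  (degree_mul_le p q).trans_lt (WithBot.add_lt_coe_of_lt_coe_sub hp hq)

theorem Polynomial.degree_mul_lt_coe_add {p q : R[X]} {a b : ℕ} (hp : p.degree < a)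
    (hq : q.degree ≤ b) : (p * q).degree < ↑(a + b) :=
  degree_mul_lt_of_lt_coe_sub (by rwa [Nat.add_sub_cancel]) hq

noncomputable def ofCoeffVec (u : Fin m → R) : R[X] :=
  ((degreeLTEquiv R m).symm u : R[X])

theorem ofCoeffVec_eq_sum (u : Fin m → R) :
    ofCoeffVec u = ∑ j : Fin m, monomial (j : ℕ) (u j) :=
  rfl

theorem degree_ofCoeffVec_lt (u : Fin m → R) : (ofCoeffVec u).degree < m :=
  mem_degreeLT.1 ((degreeLTEquiv R m).symm u).2

theorem coeff_ofCoeffVec (u : Fin m → R) (i : Fin m) : (ofCoeffVec u).coeff i = u i :=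
  congrFun ((degreeLTEquiv R m).apply_symm_apply u) i

theorem ofCoeffVec_coeff {P : R[X]} (hP : P.degree < m) :
    ofCoeffVec (fun i : Fin m => P.coeff i) = P :=
  congrArg Subtype.val ((degreeLTEquiv R m).symm_apply_apply ⟨P, mem_degreeLT.2 hP⟩)

theorem ofCoeffVec_eq_zero_iff {u : Fin m → R} : ofCoeffVec u = 0 ↔ u = 0 := by
  rw [ofCoeffVec, ZeroMemClass.coe_eq_zero, LinearEquiv.map_eq_zero_iff]

end CoeffVec

theorem Polynomial.exists_degree_lt_X_pow_dvd_sub_iff {R : Type*} [Ring R] (P : R[X])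
    (a N : ℕ) :
    (∃ W : R[X], W.degree < a ∧ X ^ N ∣ P - W) ↔ ∀ k, a ≤ k → k < N → P.coeff k = 0 := by
  constructor
  · rintro ⟨W, hW, hdvd⟩ k hak hkN
    have := X_pow_dvd_iff.1 hdvd k hkN
    rwa [coeff_sub, coeff_eq_zero_of_degree_lt (hW.trans_le (by exact_mod_cast hak)),
      sub_zero] at this
  · intro h
    refine ⟨ofCoeffVec (fun i : Fin a => P.coeff i), degree_ofCoeffVec_lt _, ?_⟩
    rw [X_pow_dvd_iff]
    intro k hk
    by_cases hka : k < a
    · rw [coeff_sub, coeff_ofCoeffVec _ ⟨k, hka⟩, sub_self]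
    · rw [coeff_sub, h k (by omega) hk, coeff_eq_zero_of_degree_lt
        ((degree_ofCoeffVec_lt _).trans_le (by exact_mod_cast not_lt.1 hka)), sub_zero]

section ReducedBasis

variable {F : Type*} [Field F]

/-- `(A₁, W₁), (A₂, W₂)` is a basis of the `F[X]`-module `{(V, W) | X ^ N ∣ V * S - W}` that is
reduced for the weights `w₁ ≤ w₂`, `w₁ + w₂ = N`. The tie-break `degree_A₁_eq_of_eq` is what
makes `deg A₁ = ρ(α)`. -/
structure IsReducedBasis (N : ℕ) (S A₁ W₁ A₂ W₂ : F[X]) (w₁ w₂ : ℕ) : Prop where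
  dvd₁ : X ^ N ∣ A₁ * S - W₁
  dvd₂ : X ^ N ∣ A₂ * S - W₂
  det_eq : ∃ γ : F, γ ≠ 0 ∧ A₁ * W₂ - A₂ * W₁ = C γ * X ^ N
  isCoprime : IsCoprime A₁ A₂
  add_eq : w₁ + w₂ = N
  le : w₁ ≤ w₂
  degree_A₁_le : A₁.degree ≤ w₁
  degree_W₁_le : W₁.degree ≤ w₁
  degree_A₂_le : A₂.degree ≤ w₂
  degree_W₂_le : W₂.degree ≤ w₂
  degree_A₁_eq_of_eq : w₁ = w₂ → A₁.degree = w₁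

namespace IsReducedBasis

variable {N : ℕ} {S A₁ W₁ A₂ W₂ : F[X]} {w₁ w₂ : ℕ}

theorem A₁_ne_zero (hb : IsReducedBasis N S A₁ W₁ A₂ W₂ w₁ w₂) (hN : 0 < N) : A₁ ≠ 0 := by
  rintro rfl
  obtain ⟨γ, hγ, hdet⟩ := hb.det_eq
  have hW₁ : W₁ = 0 := by
    have hdvd : X ^ N ∣ W₁ := by simpa using hb.dvd₁
    by_contra hW₁
    have := (degree_le_of_dvd hdvd hW₁).trans hb.degree_W₁_le
    rw [degree_X_pow, Nat.cast_le] at this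
    have := hb.add_eq
    have := hb.le
    omega
  simp [hW₁, hγ] at hdet

theorem two_mul_le (hb : IsReducedBasis N S A₁ W₁ A₂ W₂ w₁ w₂) : 2 * w₁ ≤ N := by
  have := hb.add_eq
  have := hb.le
  omega

theorem natDegree_A₁_le (hb : IsReducedBasis N S A₁ W₁ A₂ W₂ w₁ w₂) : A₁.natDegree ≤ w₁ :=
  natDegree_le_iff_degree_le.2 hb.degree_A₁_le

/-- Cramer's rule for the `2 × 2` system `V = B₁ A₁ + B₂ A₂`, `W = B₁ W₁ + B₂ W₂`. -/
theorem exists_combination (hb : IsReducedBasis N S A₁ W₁ A₂ W₂ w₁ w₂) {V W : F[X]}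
    (hVW : X ^ N ∣ V * S - W) :
    ∃ B₁ B₂ : F[X], V = B₁ * A₁ + B₂ * A₂ ∧ W = B₁ * W₁ + B₂ * W₂ ∧
      B₁.degree + N = (V * W₂ - W * A₂).degree ∧ B₂.degree + N = (W * A₁ - V * W₁).degree := by
  obtain ⟨γ, hγ, hdet⟩ := hb.det_eq
  obtain ⟨c₁, hc₁⟩ : X ^ N ∣ V * W₂ - W * A₂ := by
    have := dvd_sub (hb.dvd₂.mul_left V) (hVW.mul_left A₂)
    rwa [show V * (A₂ * S - W₂) - A₂ * (V * S - W) = -(V * W₂ - W * A₂) by ring, dvd_neg] at this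
  obtain ⟨c₂, hc₂⟩ : X ^ N ∣ W * A₁ - V * W₁ := by
    have := dvd_sub (hVW.mul_left A₁) (hb.dvd₁.mul_left V)
    rwa [show A₁ * (V * S - W) - V * (A₁ * S - W₁) = -(W * A₁ - V * W₁) by ring, dvd_neg] at this
  have hinv : C γ * C γ⁻¹ = 1 := by rw [← C_mul, mul_inv_cancel₀ hγ, C_1]
  have hXN : C γ * X ^ N ≠ (0 : F[X]) := mul_ne_zero (C_ne_zero.2 hγ) (pow_ne_zero _ X_ne_zero)
  refine ⟨C γ⁻¹ * c₁, C γ⁻¹ * c₂, ?_, ?_, ?_, ?_⟩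
  · refine mul_left_cancel₀ hXN ?_
    linear_combination -V * hdet + A₁ * hc₁ + A₂ * hc₂ - X ^ N * (c₁ * A₁ + c₂ * A₂) * hinv
  · refine mul_left_cancel₀ hXN ?_
    linear_combination -W * hdet + W₁ * hc₁ + W₂ * hc₂ - X ^ N * (c₁ * W₁ + c₂ * W₂) * hinv
  · rw [hc₁, degree_C_mul (inv_ne_zero hγ), degree_mul, degree_X_pow, add_comm]
  · rw [hc₂, degree_C_mul (inv_ne_zero hγ), degree_mul, degree_X_pow, add_comm]

theorem degree_A₂_eq (hb : IsReducedBasis N S A₁ W₁ A₂ W₂ w₁ w₂)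
    (h : A₁.degree < w₁) : A₂.degree = w₂ := by
  obtain ⟨γ, hγ, hdet⟩ := hb.det_eq
  have hlt : (A₁ * W₂).degree < (C γ * X ^ N).degree := by
    rw [degree_C_mul_X_pow N hγ, ← hb.add_eq]
    exact degree_mul_lt_coe_add h hb.degree_W₂_le
  have hprod : (A₂ * W₁).degree = N := by
    rw [show A₂ * W₁ = A₁ * W₂ - C γ * X ^ N by linear_combination -hdet,
      degree_sub_eq_right_of_degree_lt hlt, degree_C_mul_X_pow N hγ]
  refine hb.degree_A₂_le.antisymm (not_lt.1 fun hA₂ => ?_)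
  have := degree_mul_lt_coe_add hA₂ hb.degree_W₁_le
  rw [hprod, add_comm, hb.add_eq] at this
  exact lt_irrefl _ this

end IsReducedBasis

variable {N : ℕ} {S : F[X]}

/-- Invariant of the extended Euclidean algorithm on `(X ^ N, S)`, run on pairs `(v, r)` with
`v * S ≡ r` modulo `X ^ N`. -/
structure EuclidInvariant (N : ℕ) (S r₀ r₁ v₀ v₁ : F[X]) : Prop where
  dvd₀ : X ^ N ∣ v₀ * S - r₀
  dvd₁ : X ^ N ∣ v₁ * S - r₁
  det_eq : ∃ γ : F, γ ≠ 0 ∧ v₁ * r₀ - v₀ * r₁ = C γ * X ^ N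
  isCoprime : IsCoprime v₀ v₁
  degree_r₁_lt : r₁.degree < r₀.degree
  degree_v₁_add : v₁.degree + r₀.degree = N
  degree_v₀_le : v₀.degree ≤ r₀.degree
  degree_v₀_add_lt : v₀.degree + r₀.degree < N

namespace EuclidInvariant

variable {r₀ r₁ v₀ v₁ : F[X]}

theorem init (hS : S.degree < N) : EuclidInvariant N S (X ^ N) S 0 1 where
  dvd₀ := by simp
  dvd₁ := by simp
  det_eq := ⟨1, one_ne_zero, by simp⟩
  isCoprime := isCoprime_zero_left.2 isUnit_one
  degree_r₁_lt := by rwa [degree_X_pow]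
  degree_v₁_add := by rw [degree_one, degree_X_pow, zero_add]
  degree_v₀_le := by simp
  degree_v₀_add_lt := by simp

theorem degree_r₀_ne_bot (h : EuclidInvariant N S r₀ r₁ v₀ v₁) : r₀.degree ≠ ⊥ := fun h₀ => by
  simpa [h₀] using h.degree_v₁_add

theorem degree_v₁_ne_bot (h : EuclidInvariant N S r₀ r₁ v₀ v₁) : v₁.degree ≠ ⊥ := fun h₁ => by
  simpa [h₁] using h.degree_v₁_add

theorem step (h : EuclidInvariant N S r₀ r₁ v₀ v₁) (hcont : N ≤ r₀.degree + r₁.degree) :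
    EuclidInvariant N S r₁ (r₀ % r₁) v₁ (v₀ - r₀ / r₁ * v₁) := by
  have hr₁ : r₁ ≠ 0 := by
    rintro rfl
    simp at hcont
  have hdiv : r₁ * (r₀ / r₁) + r₀ % r₁ = r₀ := EuclideanDomain.div_add_mod r₀ r₁
  have hqv : (r₀ / r₁ * v₁).degree + r₁.degree = N := by
    rw [degree_mul, ← h.degree_v₁_add, ← degree_add_div hr₁ h.degree_r₁_lt.le]
    ac_rfl
  have hv₀ : v₀.degree < (r₀ / r₁ * v₁).degree := by
    refine (WithBot.add_lt_add_iff_right h.degree_r₀_ne_bot).1 ?_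
    calc v₀.degree + r₀.degree < N := h.degree_v₀_add_lt
      _ = (r₀ / r₁ * v₁).degree + r₁.degree := hqv.symm
      _ ≤ (r₀ / r₁ * v₁).degree + r₀.degree := by gcongr; exact h.degree_r₁_lt.le
  obtain ⟨γ, hγ, hdet⟩ := h.det_eq
  refine
    { dvd₀ := h.dvd₁
      dvd₁ := ?_
      det_eq := ⟨-γ, neg_ne_zero.2 hγ, ?_⟩
      isCoprime := ?_
      degree_r₁_lt := EuclideanDomain.mod_lt r₀ hr₁
      degree_v₁_add := by rw [degree_sub_eq_right_of_degree_lt hv₀, hqv]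
      degree_v₀_le := ?_
      degree_v₀_add_lt := ?_ }
  · have := dvd_sub h.dvd₀ (h.dvd₁.mul_left (r₀ / r₁))
    rwa [show v₀ * S - r₀ - r₀ / r₁ * (v₁ * S - r₁) = (v₀ - r₀ / r₁ * v₁) * S - r₀ % r₁ by
      linear_combination hdiv] at this
  · rw [map_neg]
    linear_combination -hdet - v₁ * hdiv
  · simpa [sub_eq_add_neg, mul_comm] using h.isCoprime.symm.add_mul_left_right (-(r₀ / r₁))
  · refine (WithBot.add_le_add_iff_right h.degree_r₀_ne_bot).1 ?_
    rw [h.degree_v₁_add, add_comm]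
    exact hcont
  · calc v₁.degree + r₁.degree < v₁.degree + r₀.degree :=
          WithBot.add_lt_add_left h.degree_v₁_ne_bot h.degree_r₁_lt
      _ = N := h.degree_v₁_add

theorem exists_isReducedBasis_of_lt (h : EuclidInvariant N S r₀ r₁ v₀ v₁)
    (hstop : r₀.degree + r₁.degree < N) :
    ∃ A₁ W₁ A₂ W₂ : F[X], ∃ w₁ w₂ : ℕ, IsReducedBasis N S A₁ W₁ A₂ W₂ w₁ w₂ := by
  obtain ⟨γ, hγ, hdet⟩ := h.det_eq
  set e := r₀.natDegree
  have hr₀ : r₀.degree = e := degree_eq_natDegree (degree_ne_bot.1 h.degree_r₀_ne_bot)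
  have hv₁ : v₁.degree = ↑(N - e) := WithBot.eq_coe_sub_of_add_eq (hr₀ ▸ h.degree_v₁_add)
  have hr₁ : r₁.degree ≤ ↑(N - e) :=
    (WithBot.lt_coe_sub_of_add_lt (by rwa [hr₀, add_comm] at hstop)).le
  have heN : e ≤ N := by
    have := h.degree_v₁_add
    rw [hr₀, hv₁] at this
    exact_mod_cast (Nat.le_add_left _ _).trans_eq (WithBot.coe_inj.1 this)
  by_cases hle : N - e ≤ e
  · exact ⟨v₁, r₁, v₀, r₀, N - e, e,
      { dvd₁ := h.dvd₁, dvd₂ := h.dvd₀, det_eq := ⟨γ, hγ, hdet⟩, isCoprime := h.isCoprime.symm,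
        add_eq := by omega, le := hle, degree_A₁_le := hv₁.le, degree_W₁_le := hr₁,
        degree_A₂_le := hr₀ ▸ h.degree_v₀_le, degree_W₂_le := hr₀.le,
        degree_A₁_eq_of_eq := fun _ => hv₁ }⟩
  · exact ⟨v₀, r₀, v₁, r₁, e, N - e,
      { dvd₁ := h.dvd₀, dvd₂ := h.dvd₁,
        det_eq := ⟨-γ, neg_ne_zero.2 hγ, by rw [map_neg]; linear_combination -hdet⟩,
        isCoprime := h.isCoprime, add_eq := by omega, le := by omega,
        degree_A₁_le := hr₀ ▸ h.degree_v₀_le, degree_W₁_le := hr₀.le, degree_A₂_le := hv₁.le,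
        degree_W₂_le := hr₁, degree_A₁_eq_of_eq := by omega }⟩

theorem exists_isReducedBasis (h : EuclidInvariant N S r₀ r₁ v₀ v₁) :
    ∃ A₁ W₁ A₂ W₂ : F[X], ∃ w₁ w₂ : ℕ, IsReducedBasis N S A₁ W₁ A₂ W₂ w₁ w₂ := by
  induction r₁ using degree_lt_wf.induction generalizing r₀ v₀ v₁ with
  | _ r₁ ih =>
    by_cases hstop : r₀.degree + r₁.degree < N
    · exact h.exists_isReducedBasis_of_lt hstop
    · have h' := h.step (not_lt.1 hstop)
      exact ih _ h'.degree_r₁_lt h'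

end EuclidInvariant

theorem exists_isReducedBasis (hS : S.degree < N) :
    ∃ A₁ W₁ A₂ W₂ : F[X], ∃ w₁ w₂ : ℕ, IsReducedBasis N S A₁ W₁ A₂ W₂ w₁ w₂ :=
  (EuclidInvariant.init hS).exists_isReducedBasis

end ReducedBasis

section Hankel

variable {F : Type} [Field F]

/-- `∑ₖ α k X^(n+1-k)`: the coefficient of `X^(n+1-i)` in `ofCoeffVec u * seqPoly n α` is
row `i` of `H_{l,m}(α) u`. -/
noncomputable def seqPoly (n : ℕ) (α : ℕ → F) : F[X] :=
  ∑ k ∈ Finset.range (n + 1), C (α k) * X ^ (n + 1 - k)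

theorem coeff_seqPoly {n e : ℕ} (α : ℕ → F) (he₁ : 1 ≤ e) (he₂ : e ≤ n + 1) :
    (seqPoly n α).coeff e = α (n + 1 - e) := by
  rw [seqPoly, finsetSum_coeff, Finset.sum_eq_single (n + 1 - e)]
  · rw [coeff_C_mul_X_pow, if_pos (by omega)]
  · intro k hk hke
    rw [coeff_C_mul_X_pow, if_neg (by simp at hk; omega)]
  · simp
    omega

theorem degree_seqPoly_lt (n : ℕ) (α : ℕ → F) : (seqPoly n α).degree < ↑(n + 2) := by
  refine (degree_sum_le _ _).trans_lt ((Finset.sup_lt_iff (WithBot.bot_lt_coe _)).2 ?_)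
  intro k _
  exact (degree_C_mul_X_pow_le _ _).trans_lt (by exact_mod_cast (by omega))

theorem hankel_mulVec_apply (n : ℕ) {l m : ℕ} (α : ℕ → F) (u : Fin m → F) (i : Fin l)
    (hi : (i : ℕ) + m ≤ n + 1) :
    (hankel F l m α *ᵥ u) i = (ofCoeffVec u * seqPoly n α).coeff (n + 1 - i) := by
  rw [ofCoeffVec_eq_sum, Finset.sum_mul, finsetSum_coeff, mulVec, dotProduct]
  refine Finset.sum_congr rfl fun j _ => ?_
  rw [← C_mul_X_pow_eq_monomial, mul_assoc, coeff_C_mul, coeff_X_pow_mul', if_pos (by omega),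
    coeff_seqPoly α (by omega) (by omega), show n + 1 - (n + 1 - i - j) = i + j by omega]
  exact mul_comm _ _

theorem hankel_mulVec_eq_zero_iff (n : ℕ) {l m : ℕ} (α : ℕ → F) (hlm : l + m ≤ n + 2)
    (u : Fin m → F) :
    hankel F l m α *ᵥ u = 0 ↔
      ∃ W : F[X], W.degree < ↑(n + 2 - l) ∧ X ^ (n + 2) ∣ ofCoeffVec u * seqPoly n α - W := by
  rw [exists_degree_lt_X_pow_dvd_sub_iff, funext_iff]
  constructor
  · intro h k hk₁ hk₂
    have hi : n + 1 - k < l := by omega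
    have := h ⟨n + 1 - k, hi⟩
    rwa [hankel_mulVec_apply n α u _ (by dsimp only; omega),
      show n + 1 - (n + 1 - k) = k by omega] at this
  · intro h i
    have hi := i.2
    rw [hankel_mulVec_apply n α u i (by omega)]
    exact h _ (by omega) (by omega)

theorem det_hankel_eq_zero_iff (n : ℕ) {l : ℕ} (α : ℕ → F) (hl : 2 * l ≤ n + 2) :
    (hankel F l l α).det = 0 ↔ ∃ V W : F[X], V ≠ 0 ∧ V.degree < l ∧ W.degree < ↑(n + 2 - l) ∧
      X ^ (n + 2) ∣ V * seqPoly n α - W := by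
  rw [← exists_mulVec_eq_zero_iff]
  constructor
  · rintro ⟨u, hu, hHu⟩
    obtain ⟨W, hW, hdvd⟩ := (hankel_mulVec_eq_zero_iff n α (by omega) u).1 hHu
    exact ⟨ofCoeffVec u, W, ofCoeffVec_eq_zero_iff.not.2 hu, degree_ofCoeffVec_lt u, hW, hdvd⟩
  · rintro ⟨V, W, hV, hVl, hW, hdvd⟩
    refine ⟨fun i => V.coeff i, fun hu => hV ?_, ?_⟩
    · rw [← ofCoeffVec_coeff hVl, hu, ofCoeffVec_eq_zero_iff]
    · exact (hankel_mulVec_eq_zero_iff n α (by omega) _).2 ⟨W, hW, by rwa [ofCoeffVec_coeff hVl]⟩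

variable {n : ℕ} {α : ℕ → F} {A₁ W₁ A₂ W₂ : F[X]}

theorem degLE_iff_degree_lt {B : F[X]} {k : ℤ} : degLE F B k ↔ B.degree < ↑(k + 1).toNat := by
  rw [degLE, degree_lt_iff_coeff_zero]
  exact forall_congr' fun i => ⟨fun h hi => h (by omega), fun h hi => h (by omega)⟩

theorem degLE_iff_eq_zero {B : F[X]} {k : ℤ} (hk : k < 0) : degLE F B k ↔ B = 0 :=
  ⟨fun h => ext fun i => h i (by omega), fun h i _ => by simp [h]⟩

theorem IsReducedBasis.isCharSeq {r w : ℕ}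
    (hb : IsReducedBasis (n + 2) (seqPoly n α) A₁ W₁ A₂ W₂ r w) : IsCharSeq F n r A₁ A₂ α := by
  intro l m _ _ hlm
  have hrw := hb.add_eq
  have hw₁ : ((m : ℤ) - r - 1 + 1).toNat = m - r := by omega
  have hw₂ : ((m : ℤ) - ((n : ℤ) + 2 - r) - 1 + 1).toNat = m - w := by omega
  ext u
  simp only [Set.mem_ofPred_eq, degLE_iff_degree_lt, hw₁, hw₂]
  rw [hankel_mulVec_eq_zero_iff n α hlm.le, show n + 2 - l = m by omega]
  constructor
  · rintro ⟨W, hW, hdvd⟩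
    have hV := degree_ofCoeffVec_lt u
    obtain ⟨B₁, B₂, hVB, -, hB₁, hB₂⟩ := hb.exists_combination hdvd
    refine ⟨B₁, B₂, ?_, ?_, funext fun i => by rw [← hVB, coeff_ofCoeffVec]⟩
    · have := (degree_sub_le _ _).trans_lt <| max_lt
        (degree_mul_lt_coe_add hV hb.degree_W₂_le) (degree_mul_lt_coe_add hW hb.degree_A₂_le)
      rw [← hB₁] at this
      simpa only [show m + w - (n + 2) = m - r by omega] using
        WithBot.lt_coe_sub_of_add_lt this
    · have := (degree_sub_le _ _).trans_lt <| max_lt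
        (degree_mul_lt_coe_add hW hb.degree_A₁_le) (degree_mul_lt_coe_add hV hb.degree_W₁_le)
      rw [← hB₂] at this
      simpa only [show m + r - (n + 2) = m - w by omega] using
        WithBot.lt_coe_sub_of_add_lt this
  · rintro ⟨B₁, B₂, hB₁, hB₂, rfl⟩
    have hP : (B₁ * A₁ + B₂ * A₂).degree < m := (degree_add_le _ _).trans_lt <| max_lt
      (degree_mul_lt_of_lt_coe_sub hB₁ hb.degree_A₁_le)
      (degree_mul_lt_of_lt_coe_sub hB₂ hb.degree_A₂_le)
    refine ⟨B₁ * W₁ + B₂ * W₂, (degree_add_le _ _).trans_lt <| max_lt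
      (degree_mul_lt_of_lt_coe_sub hB₁ hb.degree_W₁_le)
      (degree_mul_lt_of_lt_coe_sub hB₂ hb.degree_W₂_le), ?_⟩
    rw [ofCoeffVec_coeff hP]
    convert dvd_add (hb.dvd₁.mul_left B₁) (hb.dvd₂.mul_left B₂) using 1
    ring

namespace IsCharSeq

variable {r : ℕ} {l m : ℕ}

theorem ker_eq_of_le (h : IsCharSeq F n r A₁ A₂ α) (hl : 1 ≤ l) (hm : 1 ≤ m)
    (hlm : l + m = n + 2) (hmr : m ≤ n + 2 - r) :
    {v : Fin m → F | hankel F l m α *ᵥ v = 0} =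
      {v | ∃ B₁ : F[X], degLE F B₁ ((m : ℤ) - r - 1) ∧ v = fun i : Fin m => (B₁ * A₁).coeff i} := by
  rw [h l m hl hm hlm]
  ext v
  have hneg : (m : ℤ) - ((n : ℤ) + 2 - r) - 1 < 0 := by omega
  simp only [Set.mem_ofPred_eq, degLE_iff_eq_zero hneg]
  constructor
  · rintro ⟨B₁, B₂, hB₁, rfl, rfl⟩
    exact ⟨B₁, hB₁, by simp⟩
  · rintro ⟨B₁, hB₁, rfl⟩
    exact ⟨B₁, 0, hB₁, rfl, by simp⟩

theorem eq_zero_of_mulVec_eq_zero (h : IsCharSeq F n r A₁ A₂ α) (hl : 1 ≤ l) (hm : 1 ≤ m)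
    (hlm : l + m = n + 2) (hmr : m ≤ r) (hr : 2 * r ≤ n + 2) {v : Fin m → F}
    (hv : hankel F l m α *ᵥ v = 0) : v = 0 := by
  have hv' : v ∈ {v : Fin m → F | hankel F l m α *ᵥ v = 0} := hv
  rw [h.ker_eq_of_le hl hm hlm (by omega)] at hv'
  obtain ⟨B₁, hB₁, rfl⟩ := hv'
  rw [(degLE_iff_eq_zero (by omega)).1 hB₁]
  rfl

theorem rank_hankel (h : IsCharSeq F n r A₁ A₂ α) (hA₁ : A₁ ≠ 0) (hdeg : A₁.degree ≤ r)
    (hr : 2 * r ≤ n + 2) : (hankel F ((n + 2) / 2) ((n + 3) / 2) α).rank = r := by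
  set m := (n + 3) / 2 with hm
  let f : degreeLT F (m - r) →ₗ[F] Fin m → F := (LinearMap.pi fun i : Fin m => lcoeff F i) ∘ₗ
    LinearMap.mulRight F A₁ ∘ₗ (degreeLT F (m - r)).subtype
  have hker : LinearMap.ker (hankel F ((n + 2) / 2) m α).mulVecLin = LinearMap.range f := by
    ext v
    have := Set.ext_iff.1
      (h.ker_eq_of_le (l := (n + 2) / 2) (by omega) (by omega) (by omega) (by omega)) v
    simp only [Set.mem_ofPred_eq, degLE_iff_degree_lt,
      show ((m : ℤ) - r - 1 + 1).toNat = m - r by omega] at this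
    rw [LinearMap.mem_ker, mulVecLin_apply, this]
    constructor
    · rintro ⟨B₁, hB₁, rfl⟩
      exact ⟨⟨B₁, mem_degreeLT.2 hB₁⟩, rfl⟩
    · rintro ⟨⟨B₁, hB₁⟩, rfl⟩
      exact ⟨B₁, mem_degreeLT.1 hB₁, rfl⟩
  have hinj : Function.Injective f := by
    rw [← LinearMap.ker_eq_bot, Submodule.eq_bot_iff]
    rintro ⟨B, hB⟩ hfB
    have hdeg : (B * A₁).degree < m := degree_mul_lt_of_lt_coe_sub (mem_degreeLT.1 hB) hdeg
    have hBA : B * A₁ = 0 := by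
      rw [← ofCoeffVec_coeff hdeg]
      exact ofCoeffVec_eq_zero_iff.2 (LinearMap.mem_ker.1 hfB)
    exact Subtype.ext ((mul_eq_zero.1 hBA).resolve_right hA₁)
  have hrank := LinearMap.finrank_range_add_finrank_ker (hankel F ((n + 2) / 2) m α).mulVecLin
  rw [hker, LinearMap.finrank_range_of_inj hinj, (degreeLTEquiv F _).finrank_eq,
    Module.finrank_fin_fun, Module.finrank_fin_fun] at hrank
  rw [Matrix.rank]
  omega

end IsCharSeq

namespace IsReducedBasis

variable {w₁ w₂ : ℕ}

theorem det_hankel_natDegree_ne_zero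
    (hb : IsReducedBasis (n + 2) (seqPoly n α) A₁ W₁ A₂ W₂ w₁ w₂) :
    (hankel F A₁.natDegree A₁.natDegree α).det ≠ 0 := by
  have hA₁ := hb.A₁_ne_zero (Nat.succ_pos _)
  have hd := hb.natDegree_A₁_le
  have hw := hb.two_mul_le
  rw [Ne, det_hankel_eq_zero_iff n α (by omega)]
  rintro ⟨V, W, hV, hVd, hW, hdvd⟩
  obtain ⟨B₁, B₂, hVB, -, -, hB₂⟩ := hb.exists_combination hdvd
  have hB₂0 : B₂ = 0 := by
    have := (degree_sub_le _ _).trans_lt <| max_lt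
      (degree_mul_lt_of_lt_coe_sub hW degree_le_natDegree)
      (degree_mul_lt_of_lt_coe_sub (hVd.trans_le (by exact_mod_cast (by omega))) hb.degree_W₁_le)
    rw [← hB₂] at this
    simpa [Nat.WithBot.lt_zero_iff] using WithBot.lt_coe_sub_of_add_lt this
  have hdvdV : A₁ ∣ V := ⟨B₁, by rw [hVB, hB₂0]; ring⟩
  exact (degree_le_of_dvd hdvdV hV).not_gt (degree_eq_natDegree hA₁ ▸ hVd)

theorem det_hankel_eq_zero (hb : IsReducedBasis (n + 2) (seqPoly n α) A₁ W₁ A₂ W₂ w₁ w₂)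
    {l : ℕ} (hdl : A₁.natDegree < l) (hl : l ≤ (n + 2) / 2) : (hankel F l l α).det = 0 := by
  have hA₁ := hb.A₁_ne_zero (Nat.succ_pos _)
  have hw := hb.add_eq
  -- a tie `w₁ = w₂` forces `deg A₁ = w₁ < l`
  have hwl : w₁ < n + 2 - l := by
    rcases hb.le.lt_or_eq with hlt | heq
    · omega
    · have := hb.degree_A₁_eq_of_eq heq
      rw [degree_eq_natDegree hA₁, Nat.cast_inj] at this
      omega
  rw [det_hankel_eq_zero_iff n α (by omega)]
  exact ⟨A₁, W₁, hA₁, degree_eq_natDegree hA₁ ▸ (by exact_mod_cast hdl),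
    hb.degree_W₁_le.trans_lt (by exact_mod_cast hwl), hb.dvd₁⟩

theorem rhoC_eq (hb : IsReducedBasis (n + 2) (seqPoly n α) A₁ W₁ A₂ W₂ w₁ w₂) :
    rhoC F n α = A₁.natDegree := by
  have hd := hb.natDegree_A₁_le
  have hw := hb.two_mul_le
  refine IsGreatest.csSup_eq ⟨⟨by omega, hb.det_hankel_natDegree_ne_zero⟩, ?_⟩
  rintro l ⟨hl, hdet⟩
  exact not_lt.1 fun hdl => hdet (hb.det_hankel_eq_zero hdl hl)

end IsReducedBasis

end Hankel

theorem stmt_7_general (F : Type) [Field F] (n r ρ₁ : ℕ) (α : ℕ → F)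
    (hrank : (hankel F ((n + 2) / 2) ((n + 3) / 2) α).rank = r)
    (hρ : rhoC F n α = ρ₁) :
    ∃ A₁ A₂ : Polynomial F, IsCoprime A₁ A₂ ∧
      A₁.degree = (ρ₁ : WithBot ℕ) ∧
      A₂.degree ≤ ((n + 2 - r : ℕ) : WithBot ℕ) ∧
      (ρ₁ ≠ r → A₂.degree = ((n + 2 - r : ℕ) : WithBot ℕ)) ∧
      ∀ l m : ℕ, 1 ≤ l → 1 ≤ m → l + m = n + 2 →
        ((m ≤ r → ∀ v : Fin m → F, (hankel F l m α).mulVec v = 0 → v = 0) ∧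
         (r + 1 ≤ m → m ≤ n + 2 - r →
           {v : Fin m → F | (hankel F l m α).mulVec v = 0} =
           {v : Fin m → F | ∃ B₁ : Polynomial F, degLE F B₁ ((m : ℤ) - r - 1) ∧
             v = fun i : Fin m => (B₁ * A₁).coeff (i : ℕ)}) ∧
         (n + 2 - r + 1 ≤ m →
           {v : Fin m → F | (hankel F l m α).mulVec v = 0} =
           {v : Fin m → F | ∃ B₁ B₂ : Polynomial F,
             degLE F B₁ ((m : ℤ) - r - 1) ∧
             degLE F B₂ ((m : ℤ) - ((n : ℤ) + 2 - r) - 1) ∧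
             v = fun i : Fin m => (B₁ * A₁ + B₂ * A₂).coeff (i : ℕ)})) := by
  obtain ⟨A₁, W₁, A₂, W₂, w₁, w₂, hb⟩ := exists_isReducedBasis (degree_seqPoly_lt n α)
  have hA₁ := hb.A₁_ne_zero (Nat.succ_pos _)
  have hw := hb.two_mul_le
  have hchar := hb.isCharSeq
  obtain rfl : w₁ = r := hrank ▸ (hchar.rank_hankel hA₁ hb.degree_A₁_le hw).symm
  obtain rfl : A₁.natDegree = ρ₁ := hρ ▸ hb.rhoC_eq.symm
  obtain rfl : w₂ = n + 2 - w₁ := by have := hb.add_eq; omega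
  refine ⟨A₁, A₂, hb.isCoprime, degree_eq_natDegree hA₁, hb.degree_A₂_le,
    fun hne => hb.degree_A₂_eq ?_, fun l m hl hm hlm =>
      ⟨fun hmr _ => hchar.eq_zero_of_mulVec_eq_zero hl hm hlm hmr hw,
        fun _ hmw => hchar.ker_eq_of_le hl hm hlm hmw, fun _ => hchar l m hl hm hlm⟩⟩
  rw [degree_eq_natDegree hA₁, Nat.cast_lt]
  exact lt_of_le_of_ne hb.natDegree_A₁_le hne

/-- kernel structure theorem. There are coprime polynomials `A₁, A₂` with
`deg A₁ = ρ(α)` and `deg A₂ ≤ c₂ = n+2-r` describing the kernels of all `H_{l,m}(α)`,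
`l+m-2 = n`, in the three ranges `m ≤ c₁`, `c₁ < m ≤ c₂`, `c₂ < m ≤ n+1`; moreover if
`ρ(α) ≠ r` then `deg A₂ = c₂`. -/
theorem stmt_7 (F : Type) [Field F] [Fintype F] (n r ρ₁ : ℕ) (hn : 0 < n) (α : ℕ → F)
    (hrank : (hankel F ((n + 2) / 2) ((n + 3) / 2) α).rank = r)
    (hρ : rhoC F n α = ρ₁) :
    ∃ A₁ A₂ : Polynomial F, IsCoprime A₁ A₂ ∧
      A₁.degree = (ρ₁ : WithBot ℕ) ∧
      A₂.degree ≤ ((n + 2 - r : ℕ) : WithBot ℕ) ∧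
      (ρ₁ ≠ r → A₂.degree = ((n + 2 - r : ℕ) : WithBot ℕ)) ∧
      ∀ l m : ℕ, 1 ≤ l → 1 ≤ m → l + m = n + 2 →
        ((m ≤ r → ∀ v : Fin m → F, (hankel F l m α).mulVec v = 0 → v = 0) ∧
         (r + 1 ≤ m → m ≤ n + 2 - r →
           {v : Fin m → F | (hankel F l m α).mulVec v = 0} =
           {v : Fin m → F | ∃ B₁ : Polynomial F, degLE F B₁ ((m : ℤ) - r - 1) ∧
             v = fun i : Fin m => (B₁ * A₁).coeff (i : ℕ)}) ∧
         (n + 2 - r + 1 ≤ m →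
           {v : Fin m → F | (hankel F l m α).mulVec v = 0} =
           {v : Fin m → F | ∃ B₁ B₂ : Polynomial F,
             degLE F B₁ ((m : ℤ) - r - 1) ∧
             degLE F B₂ ((m : ℤ) - ((n : ℤ) + 2 - r) - 1) ∧
             v = fun i : Fin m => (B₁ * A₁ + B₂ * A₂).coeff (i : ℕ)})) :=
  stmt_7_general F n r ρ₁ α hrank hρ
end

section
/- Let q be a prime power and suppose A₁, A₂ ∈ F_q[T] are coprime with r := deg A₁ ≥ 2, and let n ≥ max{r, deg A₂} + r - 2. Then there exists a sequence α ∈ F_q^{n+1} with rank H_{n₁,n₂}(α) = r, ρ(α) = r, π(α) = 0, whose characteristic polynomials are A₁, A₂; moreover α is unique up to multiplication by elements of F_q^*. -/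
open Matrix Polynomial

/-- `α` is a quasi-regular sequence of length `n+1` with rank `r` whose characteristic
polynomials are `A₁, A₂`. -/
def GoodSeq (F : Type) [Field F] (n r : ℕ) (A₁ A₂ : Polynomial F) (α : ℕ → F) : Prop :=
  (hankel F ((n + 2) / 2) ((n + 3) / 2) α).rank = r ∧
  rhoC F n α = r ∧ piC F n α = 0 ∧ IsCharSeq F n r A₁ A₂ α

/-!
Polynomials act on sequences through the shift, `(B • u)ₛ = ∑ⱼ Bⱼ u_{s+j}` (written `act B u`
below). If `P` is the polynomial with coefficient vector `v ∈ F^m`, then the entries of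
`H_{l,m}(α) v` are the first `l` terms of `P • α`.

Let `γ` be the solution of the recurrence of `A₁` with initial values `(0, …, 0, 1)`. The leading
coefficient of a polynomial `D` of degree `< r` is the term of `D • γ` at position `r - 1 - deg D`,
and all earlier terms vanish. Hence `D ↦ D • γ` is injective on polynomials of degree `< r`. By
counting dimensions it is then onto the solutions of the recurrence, and `D • γ` vanishes on its
first `l` terms only when `deg D < r - l`.

Existence: with `U A₁ + V A₂ = 1`, put `α = V • γ`, so that `A₁ • α = 0` and `A₂ • α = γ`. The
annihilator of `α` is then `(A₁)`. If `v` lies in the kernel of `H_{l,m}(α)`, then `P • α = D • γ`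
for some `D` with `deg D < r - l`, so `A₁ ∣ P - D A₂`. This gives the kernels, and the rank and
`ρ` follow from them.

Uniqueness: for `(l, m) = (1, n + 1)` the characteristic polynomials fix the kernel of the linear
form `v ↦ ∑ αᵢ vᵢ`, and two nonzero linear forms with the same kernel are proportional.
-/

namespace HankelSeq

open Finset

variable {F : Type} [Field F]

def shift : Module.End F (ℕ → F) where
  toFun u s := u (s + 1)
  map_add' _ _ := rfl
  map_smul' _ _ := rfl

noncomputable def act : F[X] →ₐ[F] Module.End F (ℕ → F) := aeval shift

lemma shift_pow_apply (j : ℕ) (u : ℕ → F) (s : ℕ) : (shift ^ j) u s = u (s + j) := by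
  induction j generalizing u with
  | zero => rfl
  | succ j ih => rw [pow_succ, Module.End.mul_apply, ih]; rfl

lemma act_apply (B : F[X]) (u : ℕ → F) (s : ℕ) :
    act B u s = ∑ j ∈ range (B.natDegree + 1), B.coeff j * u (s + j) := by
  simp [act, aeval_eq_sum_range, shift_pow_apply]

lemma act_apply_of_degree_lt {B : F[X]} {N : ℕ} (hB : B.degree < N) (u : ℕ → F) (s : ℕ) :
    act B u s = ∑ j ∈ range N, B.coeff j * u (s + j) := by
  rcases eq_or_ne B 0 with rfl | hB0
  · simp
  · simp [act, aeval_eq_sum_range' ((natDegree_lt_iff_degree_lt hB0).2 hB), shift_pow_apply]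

lemma act_mul_apply (B C : F[X]) (u : ℕ → F) : act (B * C) u = act B (act C u) := by
  rw [map_mul, Module.End.mul_apply]

lemma act_comm (B C : F[X]) (u : ℕ → F) : act B (act C u) = act C (act B u) := by
  rw [← act_mul_apply, mul_comm, act_mul_apply]

def recurrence (A : F[X]) : LinearRecurrence F where
  order := A.natDegree
  coeffs i := -(A.coeff i / A.leadingCoeff)

lemma isSolution_recurrence_iff {A : F[X]} (hA : A ≠ 0) {u : ℕ → F} :
    (recurrence A).IsSolution u ↔ act A u = 0 := by
  have hlc : A.leadingCoeff ≠ 0 := leadingCoeff_ne_zero.2 hA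
  show (∀ s, u (s + A.natDegree) =
      ∑ i : Fin A.natDegree, -(A.coeff i / A.leadingCoeff) * u (s + i)) ↔ _
  simp only [funext_iff, Pi.zero_apply, act_apply, sum_range_succ, coeff_natDegree]
  refine forall_congr' fun s => ?_
  simp only [neg_mul, sum_neg_distrib, div_mul_eq_mul_div, ← sum_div,
    Fin.sum_univ_eq_sum_range (fun i => A.coeff i * u (s + i))]
  field_simp
  constructor <;> intro h <;> linear_combination h

lemma eq_of_act_eq_zero_of_eqOn {A : F[X]} (hA : A ≠ 0) {u v : ℕ → F} (hu : act A u = 0)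
    (hv : act A v = 0) (h : ∀ i < A.natDegree, u i = v i) : u = v :=
  ((recurrence A).eq_iff_eqOn_range_order u v ((isSolution_recurrence_iff hA).2 hu)
    ((isSolution_recurrence_iff hA).2 hv)).2 fun i hi => h i (mem_range.1 hi)

noncomputable def impulse (A : F[X]) : ℕ → F :=
  (recurrence A).mkSol fun i => if (i : ℕ) + 1 = A.natDegree then 1 else 0

section Impulse

variable {A : F[X]}

lemma act_impulse (hA : A ≠ 0) : act A (impulse A) = 0 :=
  (isSolution_recurrence_iff hA).1 ((recurrence A).is_sol_mkSol _)

lemma impulse_apply_of_lt {i : ℕ} (hi : i < A.natDegree) :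
    impulse A i = if i + 1 = A.natDegree then 1 else 0 :=
  (recurrence A).mkSol_eq_init _ ⟨i, hi⟩

lemma act_impulse_apply_eq_zero {D : F[X]} {i : ℕ} (h : i + D.natDegree + 1 < A.natDegree) :
    act D (impulse A) i = 0 := by
  rw [act_apply]
  refine sum_eq_zero fun j hj => ?_
  have := mem_range.1 hj
  rw [impulse_apply_of_lt (by omega), if_neg (by omega), mul_zero]

lemma act_impulse_apply_natDegree {D : F[X]} (hD : D.natDegree < A.natDegree) :
    act D (impulse A) (A.natDegree - 1 - D.natDegree) = D.leadingCoeff := by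
  rw [act_apply, sum_range_succ, sum_eq_zero, zero_add, impulse_apply_of_lt (by omega),
    if_pos (by omega), mul_one, leadingCoeff]
  intro j hj
  have := mem_range.1 hj
  rw [impulse_apply_of_lt (by omega), if_neg (by omega), mul_zero]

lemma natDegree_add_lt_of_act_impulse_eq_zero {D : F[X]} (hD0 : D ≠ 0)
    (hD : D.natDegree < A.natDegree) {l : ℕ} (h : ∀ i < l, act D (impulse A) i = 0) :
    D.natDegree + l < A.natDegree := by
  by_contra hl
  exact leadingCoeff_ne_zero.2 hD0 (act_impulse_apply_natDegree hD ▸ h _ (by omega))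

lemma eq_zero_of_act_impulse_eq_zero {D : F[X]} (hD : D.degree < A.natDegree)
    (h : ∀ i < A.natDegree, act D (impulse A) i = 0) : D = 0 := by
  by_contra hD0
  have := natDegree_add_lt_of_act_impulse_eq_zero hD0 ((natDegree_lt_iff_degree_lt hD0).2 hD) h
  omega

variable (A) in
noncomputable def impulseInit : degreeLT F A.natDegree →ₗ[F] Fin A.natDegree → F where
  toFun D i := act (D : F[X]) (impulse A) i
  map_add' D E := by ext; simp
  map_smul' c D := by ext; simp

lemma exists_act_impulse_eq (hA : A ≠ 0) {u : ℕ → F} (hu : act A u = 0) :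
    ∃ D ∈ degreeLT F A.natDegree, act D (impulse A) = u := by
  have hinj : Function.Injective (impulseInit A) := by
    rw [← LinearMap.ker_eq_bot, LinearMap.ker_eq_bot']
    intro D hD
    exact Subtype.ext (eq_zero_of_act_impulse_eq_zero (mem_degreeLT.1 D.2)
      fun i hi => congr_fun hD ⟨i, hi⟩)
  obtain ⟨D, hD⟩ := (LinearMap.injective_iff_surjective_of_finrank_eq_finrank
    (by simp [(degreeLTEquiv F _).finrank_eq])).1 hinj fun i => u i
  refine ⟨D, D.2, eq_of_act_eq_zero_of_eqOn hA ?_ hu fun i hi => congr_fun hD ⟨i, hi⟩⟩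
  rw [act_comm, act_impulse hA, map_zero]

end Impulse

section DegLE

variable {B C : F[X]} {k l : ℤ}

lemma degLE_iff : degLE F B k ↔ B = 0 ∨ (B.natDegree : ℤ) ≤ k := by
  refine ⟨fun h => or_iff_not_imp_left.2 fun hB => ?_, ?_⟩
  · by_contra hk
    exact leadingCoeff_ne_zero.2 hB (h _ (by omega))
  · rintro (rfl | hk) i hi
    · rfl
    · exact coeff_eq_zero_of_natDegree_lt (by omega)

lemma degLE_natCast_sub_one_iff {m : ℕ} : degLE F B ((m : ℤ) - 1) ↔ B.degree < m := by
  rw [degLE, degree_lt_iff_coeff_zero]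
  exact forall_congr' fun i => ⟨fun h hi => h (by omega), fun h hi => h (by omega)⟩

lemma eq_zero_of_degLE_of_neg (h : degLE F B k) (hk : k < 0) : B = 0 :=
  (degLE_iff.1 h).resolve_right (by omega)

lemma degLE_mono (h : degLE F B k) (hkl : k ≤ l) : degLE F B l :=
  fun i hi => h i (by omega)

lemma degLE_add (hB : degLE F B k) (hC : degLE F C k) : degLE F (B + C) k :=
  fun i hi => by rw [coeff_add, hB i hi, hC i hi, add_zero]

lemma degLE_sub (hB : degLE F B k) (hC : degLE F C k) : degLE F (B - C) k :=
  fun i hi => by rw [coeff_sub, hB i hi, hC i hi, sub_zero]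

lemma degLE_mul (hB : degLE F B k) (hC : degLE F C l) : degLE F (B * C) (k + l) := by
  intro i hi
  rw [coeff_mul]
  refine sum_eq_zero fun x hx => ?_
  rw [HasAntidiagonal.mem_antidiagonal] at hx
  rcases lt_or_ge k x.1 with h | h
  · rw [hB _ h, zero_mul]
  · rw [hC _ (by omega), mul_zero]

lemma degLE_of_mul_left {A : F[X]} (hA : A ≠ 0) (h : degLE F (A * B) k) :
    degLE F B (k - A.natDegree) := by
  rcases eq_or_ne B 0 with rfl | hB
  · exact fun _ _ => rfl
  · have := (degLE_iff.1 h).resolve_left (mul_ne_zero hA hB)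
    rw [natDegree_mul hA hB] at this
    exact degLE_iff.2 (Or.inr (by omega))

end DegLE

lemma hankel_mulVec_coeff {l m : ℕ} (α : ℕ → F) {B : F[X]} (hB : B.degree < m) (i : Fin l) :
    (hankel F l m α *ᵥ fun j => B.coeff j) i = act B α i := by
  rw [act_apply_of_degree_lt hB, mulVec, dotProduct,
    ← Fin.sum_univ_eq_sum_range (fun j => B.coeff j * α (i + j))]
  simp [hankel, mul_comm]

section CharPolys

variable {A₁ A₂ : F[X]} {α : ℕ → F}

lemma exists_act_eq_zero_act_eq_impulse (hcop : IsCoprime A₁ A₂) (hA₁ : A₁ ≠ 0) :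
    ∃ α : ℕ → F, act A₁ α = 0 ∧ act A₂ α = impulse A₁ := by
  obtain ⟨U, V, hUV⟩ := hcop
  refine ⟨act V (impulse A₁), by rw [act_comm, act_impulse hA₁, map_zero], ?_⟩
  rw [← act_mul_apply, show A₂ * V = 1 - U * A₁ by linear_combination hUV, map_sub,
    LinearMap.sub_apply, act_mul_apply, act_impulse hA₁, map_one, map_zero, sub_zero,
    Module.End.one_apply]

lemma act_eq_zero_iff_dvd (hA₁ : A₁ ≠ 0) (hα₁ : act A₁ α = 0) (hα₂ : act A₂ α = impulse A₁)
    {B : F[X]} : act B α = 0 ↔ A₁ ∣ B := by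
  refine ⟨fun hB => ?_, fun ⟨C, hC⟩ => by rw [hC, act_mul_apply, act_comm, hα₁, map_zero]⟩
  have hR : act (B % A₁) α = 0 := by
    rw [EuclideanDomain.mod_eq_sub_mul_div, map_sub, LinearMap.sub_apply, hB, act_mul_apply,
      act_comm, hα₁, map_zero, sub_zero]
  rw [← EuclideanDomain.mod_eq_zero]
  refine eq_zero_of_act_impulse_eq_zero (A := A₁) ?_ fun i _ => ?_
  · exact degree_eq_natDegree hA₁ ▸ degree_mod_lt B hA₁
  · rw [← hα₂, act_comm, hR, map_zero, Pi.zero_apply]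

end CharPolys

section Kernel

variable {A₁ A₂ : F[X]} {α : ℕ → F} {n r l m : ℕ}

lemma hankel_mulVec_eq_zero_of_degLE (hα₁ : act A₁ α = 0) (hα₂ : act A₂ α = impulse A₁)
    (hdeg : A₁.natDegree = r) (hA₂ : A₂.natDegree + r ≤ n + 2) (hlm : l + m = n + 2)
    {B₁ B₂ : F[X]} (h₁ : degLE F B₁ ((m : ℤ) - r - 1))
    (h₂ : degLE F B₂ ((m : ℤ) - ((n : ℤ) + 2 - r) - 1)) :
    hankel F l m α *ᵥ (fun i : Fin m => (B₁ * A₁ + B₂ * A₂).coeff i) = 0 := by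
  have hA₁' : degLE F A₁ r := degLE_iff.2 (Or.inr (by omega))
  have hA₂' : degLE F A₂ ((n : ℤ) + 2 - r) := degLE_iff.2 (Or.inr (by omega))
  have hQ : (B₁ * A₁ + B₂ * A₂).degree < m := degLE_natCast_sub_one_iff.1 <|
    degLE_add (degLE_mono (degLE_mul h₁ hA₁') (by omega))
      (degLE_mono (degLE_mul h₂ hA₂') (by omega))
  ext i
  rw [hankel_mulVec_coeff α hQ, map_add, LinearMap.add_apply, act_mul_apply, act_mul_apply, hα₁,
    hα₂, map_zero, zero_add, Pi.zero_apply]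
  rcases degLE_iff.1 h₂ with rfl | hB₂
  · simp
  · have := i.2
    exact act_impulse_apply_eq_zero (by omega)

lemma exists_degLE_of_hankel_mulVec_eq_zero (hA₁ : A₁ ≠ 0) (hα₁ : act A₁ α = 0)
    (hα₂ : act A₂ α = impulse A₁) (hdeg : A₁.natDegree = r) (hA₂ : A₂.natDegree + r ≤ n + 2)
    (hlm : l + m = n + 2) {v : Fin m → F} (hv : hankel F l m α *ᵥ v = 0) :
    ∃ B₁ B₂ : F[X], degLE F B₁ ((m : ℤ) - r - 1) ∧
      degLE F B₂ ((m : ℤ) - ((n : ℤ) + 2 - r) - 1) ∧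
      v = fun i : Fin m => (B₁ * A₁ + B₂ * A₂).coeff i := by
  set P : F[X] := ((degreeLTEquiv F m).symm v : F[X])
  have hPv : (fun i : Fin m => P.coeff i) = v := (degreeLTEquiv F m).apply_symm_apply v
  have hP : P.degree < m := mem_degreeLT.1 ((degreeLTEquiv F m).symm v).2
  have hA₂' : degLE F A₂ ((n : ℤ) + 2 - r) := degLE_iff.2 (Or.inr (by omega))
  obtain ⟨D, hD, hDα⟩ := exists_act_impulse_eq hA₁ (u := act P α)
    (by rw [act_comm, hα₁, map_zero])
  have hDl : degLE F D ((m : ℤ) - ((n : ℤ) + 2 - r) - 1) := by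
    refine degLE_iff.2 (or_iff_not_imp_left.2 fun hD0 => ?_)
    have := natDegree_add_lt_of_act_impulse_eq_zero hD0
      ((natDegree_lt_iff_degree_lt hD0).2 (mem_degreeLT.1 hD)) (l := l) fun i hi => by
        rw [hDα, ← hankel_mulVec_coeff α hP ⟨i, hi⟩, hPv, hv, Pi.zero_apply]
    omega
  obtain ⟨B₁, hB₁⟩ := (act_eq_zero_iff_dvd hA₁ hα₁ hα₂).1
    (show act (P - D * A₂) α = 0 by
      rw [map_sub, LinearMap.sub_apply, act_mul_apply, hα₂, hDα, sub_self])
  refine ⟨B₁, D, ?_, hDl, ?_⟩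
  · have hB₁A₁ : degLE F (A₁ * B₁) ((m : ℤ) - 1) := hB₁ ▸
      degLE_sub (degLE_natCast_sub_one_iff.2 hP) (degLE_mono (degLE_mul hDl hA₂') (by omega))
    exact degLE_mono (degLE_of_mul_left hA₁ hB₁A₁) (by omega)
  · rw [← hPv, mul_comm B₁, ← hB₁, sub_add_cancel]

lemma isCharSeq_of_act (hA₁ : A₁ ≠ 0) (hα₁ : act A₁ α = 0) (hα₂ : act A₂ α = impulse A₁)
    (hdeg : A₁.natDegree = r) (hA₂ : A₂.natDegree + r ≤ n + 2) : IsCharSeq F n r A₁ A₂ α := by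
  intro l m _ _ hlm
  ext v
  refine ⟨exists_degLE_of_hankel_mulVec_eq_zero hA₁ hα₁ hα₂ hdeg hA₂ hlm, ?_⟩
  rintro ⟨B₁, B₂, h₁, h₂, rfl⟩
  exact hankel_mulVec_eq_zero_of_degLE hα₁ hα₂ hdeg hA₂ hlm h₁ h₂

end Kernel

noncomputable def mulCoeffs (A : F[X]) (k m : ℕ) : degreeLT F k →ₗ[F] Fin m → F where
  toFun B i := ((B : F[X]) * A).coeff i
  map_add' _ _ := by ext; simp [add_mul]
  map_smul' _ _ := by ext; simp

lemma mulCoeffs_injective {A : F[X]} (hA : A ≠ 0) {k m : ℕ} (hkm : k + A.natDegree ≤ m) :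
    Function.Injective (mulCoeffs A k m) := by
  rw [← LinearMap.ker_eq_bot, LinearMap.ker_eq_bot']
  rintro ⟨B, hBk⟩ hB
  suffices B * A = 0 from Subtype.ext ((mul_eq_zero.1 this).resolve_right hA)
  refine (degreeLTEquiv_eq_zero_iff_eq_zero (mem_degreeLT.2 ?_)).1 hB
  rcases eq_or_ne B 0 with rfl | hB0
  · simp
  · rw [mem_degreeLT, ← natDegree_lt_iff_degree_lt hB0] at hBk
    rw [← natDegree_lt_iff_degree_lt (mul_ne_zero hB0 hA), natDegree_mul hB0 hA]
    omega

section Invariants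

variable {A₁ A₂ : F[X]} {α : ℕ → F} {n r : ℕ}

lemma rank_hankel_of_isCharSeq (hA₁ : A₁ ≠ 0) (hdeg : A₁.natDegree = r) (hr : r + r ≤ n + 2)
    (h : IsCharSeq F n r A₁ A₂ α) : (hankel F ((n + 2) / 2) ((n + 3) / 2) α).rank = r := by
  set n₁ := (n + 2) / 2
  set n₂ := (n + 3) / 2
  have hker : LinearMap.ker (hankel F n₁ n₂ α).mulVecLin =
      LinearMap.range (mulCoeffs A₁ (n₂ - r) n₂) := by
    ext v
    rw [LinearMap.mem_ker, mulVecLin_apply, LinearMap.mem_range]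
    refine (Set.ext_iff.1 (h n₁ n₂ (by omega) (by omega) (by omega)) v).trans ⟨?_, ?_⟩
    · rintro ⟨B₁, B₂, h₁, h₂, rfl⟩
      obtain rfl := eq_zero_of_degLE_of_neg h₂ (by omega)
      refine ⟨⟨B₁, mem_degreeLT.2 (degLE_natCast_sub_one_iff.1 (degLE_mono h₁ (by omega)))⟩, ?_⟩
      ext; simp [mulCoeffs]
    · rintro ⟨B, rfl⟩
      refine ⟨B, 0, degLE_mono (degLE_natCast_sub_one_iff.2 (mem_degreeLT.1 B.2)) (by omega),
        fun _ _ => rfl, ?_⟩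
      ext; simp [mulCoeffs]
  have := LinearMap.finrank_range_add_finrank_ker (hankel F n₁ n₂ α).mulVecLin
  rw [hker, LinearMap.finrank_range_of_inj (mulCoeffs_injective hA₁ (by omega)),
    (degreeLTEquiv F _).finrank_eq, Module.finrank_fin_fun, Module.finrank_fin_fun] at this
  rw [Matrix.rank]
  omega

lemma det_hankel_natDegree_ne_zero (hA₁ : A₁ ≠ 0) (hα₁ : act A₁ α = 0)
    (hα₂ : act A₂ α = impulse A₁) : (hankel F A₁.natDegree A₁.natDegree α).det ≠ 0 := by
  rw [Ne, ← exists_mulVec_eq_zero_iff]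
  rintro ⟨v, hv0, hv⟩
  set P : F[X] := ((degreeLTEquiv F _).symm v : F[X])
  have hPv : (fun i : Fin _ => P.coeff i) = v := (degreeLTEquiv F _).apply_symm_apply v
  have hP : P.degree < A₁.natDegree := mem_degreeLT.1 ((degreeLTEquiv F _).symm v).2
  have hPα : act P α = 0 :=
    eq_of_act_eq_zero_of_eqOn hA₁ (by rw [act_comm, hα₁, map_zero]) (map_zero _) fun i hi => by
      rw [← hankel_mulVec_coeff α hP ⟨i, hi⟩, hPv, hv, Pi.zero_apply, Pi.zero_apply]
  have hP0 : P = 0 := eq_zero_of_dvd_of_degree_lt ((act_eq_zero_iff_dvd hA₁ hα₁ hα₂).1 hPα)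
    (degree_eq_natDegree hA₁ ▸ hP)
  exact hv0 (by rw [← hPv, hP0]; rfl)

lemma det_hankel_eq_zero (hA₁ : A₁ ≠ 0) (hα₁ : act A₁ α = 0) {l : ℕ}
    (hl : A₁.natDegree < l) : (hankel F l l α).det = 0 := by
  have hA₁l : A₁.degree < l := (natDegree_lt_iff_degree_lt hA₁).1 hl
  rw [← exists_mulVec_eq_zero_iff]
  refine ⟨fun j => A₁.coeff j, fun h => hA₁ ?_, ?_⟩
  · exact leadingCoeff_eq_zero.1 (congr_fun h ⟨_, hl⟩)
  · ext i
    rw [hankel_mulVec_coeff α hA₁l, hα₁]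
    rfl

lemma rhoC_eq_of_act (hA₁ : A₁ ≠ 0) (hα₁ : act A₁ α = 0) (hα₂ : act A₂ α = impulse A₁)
    (hdeg : A₁.natDegree = r) (hr : r ≤ (n + 2) / 2) : rhoC F n α = r := by
  subst hdeg
  refine IsGreatest.csSup_eq ⟨⟨hr, det_hankel_natDegree_ne_zero hA₁ hα₁ hα₂⟩, fun l hl => ?_⟩
  exact not_lt.1 fun h => hl.2 (det_hankel_eq_zero hA₁ hα₁ h)

end Invariants

lemma exists_smul_eq_of_dotProduct_eq_zero {ι : Type*} [Fintype ι] [DecidableEq ι]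
    {a b : ι → F} (h : ∀ v, a ⬝ᵥ v = 0 → b ⬝ᵥ v = 0) : ∃ c : F, c • a = b := by
  have hspan := mem_span_of_iInf_ker_le_ker (L := fun _ : Unit => dotProductEquiv F ι a)
    (K := dotProductEquiv F ι b) (by simpa [SetLike.le_def] using h)
  rw [Set.range_const, Submodule.mem_span_singleton] at hspan
  obtain ⟨c, hc⟩ := hspan
  exact ⟨c, (dotProductEquiv F ι).injective (by rw [map_smul, hc])⟩

lemma hankel_one_mulVec_eq_zero_iff {m : ℕ} (α : ℕ → F) (v : Fin m → F) :
    hankel F 1 m α *ᵥ v = 0 ↔ (fun j : Fin m => α j) ⬝ᵥ v = 0 := by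
  simp [funext_iff, mulVec, hankel]

lemma exists_eq_mul_of_isCharSeq {A₁ A₂ : F[X]} {n r : ℕ} {α α' : ℕ → F}
    (h : IsCharSeq F n r A₁ A₂ α) (h' : IsCharSeq F n r A₁ A₂ α') (hα' : ∃ i ≤ n, α' i ≠ 0) :
    ∃ c : F, c ≠ 0 ∧ ∀ i ≤ n, α' i = c * α i := by
  have hker := (h 1 (n + 1) le_rfl (by omega) (by omega)).trans
    (h' 1 (n + 1) le_rfl (by omega) (by omega)).symm
  obtain ⟨c, hc⟩ := exists_smul_eq_of_dotProduct_eq_zero (a := fun j : Fin (n + 1) => α j)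
      (b := fun j : Fin (n + 1) => α' j) fun v hv => by
    rw [← hankel_one_mulVec_eq_zero_iff] at hv ⊢
    exact (Set.ext_iff.1 hker v).1 hv
  have hcα : ∀ i ≤ n, α' i = c * α i := fun i hi => (congr_fun hc ⟨i, by omega⟩).symm
  refine ⟨c, fun hc0 => ?_, hcα⟩
  obtain ⟨i, hi, hα'i⟩ := hα'
  exact hα'i (by rw [hcα i hi, hc0, zero_mul])

lemma exists_ne_zero_of_rank_hankel_ne_zero {α : ℕ → F} {n : ℕ}
    (h : (hankel F ((n + 2) / 2) ((n + 3) / 2) α).rank ≠ 0) : ∃ i ≤ n, α i ≠ 0 := by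
  contrapose! h
  have : hankel F ((n + 2) / 2) ((n + 3) / 2) α = 0 := by
    ext i j
    exact h _ (by omega)
  rw [this, rank_zero]

end HankelSeq

open HankelSeq

theorem stmt_8_general (F : Type) [Field F] (A₁ A₂ : Polynomial F) (r n : ℕ)
    (hcop : IsCoprime A₁ A₂) (hr : 2 ≤ r) (hdeg : A₁.natDegree = r)
    (hn : max r A₂.natDegree + r ≤ n + 2) :
    (∃ α : ℕ → F, GoodSeq F n r A₁ A₂ α) ∧
    (∀ α α' : ℕ → F, GoodSeq F n r A₁ A₂ α → GoodSeq F n r A₁ A₂ α' →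
      ∃ c : F, c ≠ 0 ∧ ∀ i : ℕ, i ≤ n → α' i = c * α i) := by
  have hA₁ : A₁ ≠ 0 := ne_zero_of_natDegree_gt (n := 0) (by omega)
  refine ⟨?_, fun α α' hα hα' => ?_⟩
  · obtain ⟨α, hα₁, hα₂⟩ := exists_act_eq_zero_act_eq_impulse hcop hA₁
    have hchar := isCharSeq_of_act (n := n) hA₁ hα₁ hα₂ hdeg (by omega)
    have hrank := rank_hankel_of_isCharSeq hA₁ hdeg (by omega) hchar
    have hrho := rhoC_eq_of_act (n := n) hA₁ hα₁ hα₂ hdeg (by omega)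
    exact ⟨α, hrank, hrho, by rw [piC, hrank, hrho, Nat.sub_self], hchar⟩
  · exact exists_eq_mul_of_isCharSeq hα.2.2.2 hα'.2.2.2
      (exists_ne_zero_of_rank_hankel_ne_zero (by rw [hα'.1]; omega))

/-- for coprime `A₁, A₂` with `r = deg A₁ ≥ 2` and
`n ≥ max{r, deg A₂} + r - 2` there is a sequence `α ∈ F^{n+1}` with
`rank H_{n₁,n₂}(α) = r`, `ρ(α) = r`, `π(α) = 0` and characteristic polynomials `A₁, A₂`,
and `α` is unique up to multiplication by elements of `F^*`. -/
theorem stmt_8 (F : Type) [Field F] [Fintype F] (A₁ A₂ : Polynomial F) (r n : ℕ)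
    (hcop : IsCoprime A₁ A₂) (hr : 2 ≤ r) (hdeg : A₁.natDegree = r)
    (hn : max r A₂.natDegree + r ≤ n + 2) :
    (∃ α : ℕ → F, GoodSeq F n r A₁ A₂ α) ∧
    (∀ α α' : ℕ → F, GoodSeq F n r A₁ A₂ α → GoodSeq F n r A₁ A₂ α' →
      ∃ c : F, c ≠ 0 ∧ ∀ i : ℕ, i ≤ n → α' i = c * α i) :=
  stmt_8_general F A₁ A₂ r n hcop hr hdeg hn
end

section
/- Let q be a prime power, and suppose α = (α₀,...,αₙ) ∈ F_q^{n+1} satisfies rank H_{n₁,n₂}(α) = r, ρ(α) = r, π(α) = 0, with r ≥ 2. Let A₁, A₂ be the characteristic polynomials, with deg A₁ = r and A₂ chosen with d₂ := deg A₂ < r, and d₂ ≥ 2. Let A₃ be the remainder of A₁ modulo A₂ (so A₁ = R₂A₂ + A₃ with deg A₃ < d₂). Then the truncated sequence α⁽²⁾ := (α₀,...,α_{r+d₂-2}) satisfies rank of its associated near-square Hankel matrix equal to d₂, ρ(α⁽²⁾) = d₂, π(α⁽²⁾) = 0, and has characteristic polynomials A₂, A₃. -/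
/-!
A vector in the kernel of `H_{l,m}(α)` is the coefficient vector of a polynomial `P` with
`deg P < m` such that `∑ⱼ α_{i+j} P_j = 0` for all `i < l`. In these terms the kernels for the
truncated sequence are read off from those for `α`: writing `A₁ = Q A₂ + A₃`, a kernel element
`B₁ A₁ + B₂ A₂` equals `(B₂ + B₁ Q) A₂ + B₁ A₃`, where comparing degrees forces `deg B₁ < m - r`;
conversely `A₂` and `A₃ = A₁ - Q A₂` annihilate the rows they must. Once `A₂, A₃` describe the
kernels and `deg A₂ = d`, the `d × d` Hankel matrix is regular, every larger square one has `A₂`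
in its kernel, and the kernel of the near-square matrix is `{B A₂ : deg B < m - d}`, so
`ρ = rank = d`.
-/

open Matrix Polynomial

namespace Polynomial

variable {R : Type*} [Semiring R]

lemma eq_zero_of_degree_lt_zero {B : R[X]} (h : B.degree < ↑(0 : ℕ)) : B = 0 :=
  degree_eq_bot.1 (Nat.WithBot.lt_zero_iff.1 h)

lemma coeff_fin_eq_iff {m : ℕ} {P Q : R[X]} (hP : P.degree < m) (hQ : Q.degree < m) :
    (fun j : Fin m => P.coeff j) = (fun j : Fin m => Q.coeff j) ↔ P = Q := by
  refine ⟨fun h => ?_, fun h => h ▸ rfl⟩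
  ext k
  by_cases hk : k < m
  · exact congrFun h ⟨k, hk⟩
  · rw [coeff_eq_zero_of_degree_lt (hP.trans_le (by exact_mod_cast not_lt.1 hk)),
      coeff_eq_zero_of_degree_lt (hQ.trans_le (by exact_mod_cast not_lt.1 hk))]

lemma exists_degree_lt_coeff_eq {m : ℕ} (v : Fin m → R) :
    ∃ P : R[X], P.degree < m ∧ (fun j : Fin m => P.coeff j) = v :=
  ⟨_, mem_degreeLT.1 ((degreeLTEquiv R m).symm v).2, (degreeLTEquiv R m).apply_symm_apply v⟩

section NoZeroDivisors

variable [NoZeroDivisors R]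

lemma degree_mul_lt {A B : R[X]} {s t u : ℕ} (hB : B.degree < s) (hA : A.degree ≤ t)
    (h : 0 < s → s + t ≤ u) : (B * A).degree < u := by
  rcases eq_or_ne B 0 with rfl | hB0
  · simp
  rcases eq_or_ne A 0 with rfl | hA0
  · simp
  rw [← natDegree_lt_iff_degree_lt hB0] at hB
  rw [← natDegree_lt_iff_degree_lt (mul_ne_zero hB0 hA0), natDegree_mul hB0 hA0]
  have := natDegree_le_iff_degree_le.2 hA
  omega

lemma degree_lt_of_degree_mul_lt {A B : R[X]} {m : ℕ} (hA : A ≠ 0) (h : (B * A).degree < m) :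
    B.degree < ↑(m - A.natDegree) := by
  rcases eq_or_ne B 0 with rfl | hB0
  · simp
  rw [← natDegree_lt_iff_degree_lt hB0]
  rw [← natDegree_lt_iff_degree_lt (mul_ne_zero hB0 hA), natDegree_mul hB0 hA] at h
  omega

end NoZeroDivisors

end Polynomial

namespace Hankel

variable {F : Type} [Field F]

lemma degLE_sub_one_iff {B : F[X]} {a : ℤ} : degLE F B (a - 1) ↔ B.degree < ↑a.toNat := by
  rw [degLE, degree_lt_iff_coeff_zero]
  exact forall_congr' fun i => imp_congr_left (by omega)

/-- Row `i` of the infinite Hankel matrix of `α`, applied to the coefficient vector of a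
polynomial: `hankelRow α i P = ∑ⱼ α (i + j) * P.coeff j`. -/
noncomputable def hankelRow (α : ℕ → F) (i : ℕ) : F[X] →ₗ[F] F :=
  lsum fun j => α (i + j) • LinearMap.id

lemma hankelRow_monomial (α : ℕ → F) (i j : ℕ) (c : F) :
    hankelRow α i (monomial j c) = α (i + j) * c := by
  simp [hankelRow]

lemma hankelRow_X_pow_mul (α : ℕ → F) (i k : ℕ) (P : F[X]) :
    hankelRow α i (X ^ k * P) = hankelRow α (i + k) P := by
  induction P using Polynomial.induction_on' with
  | add P Q hP hQ => rw [mul_add, map_add, hP, hQ, map_add]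
  | monomial j c =>
    rw [X_pow_mul_monomial, hankelRow_monomial, hankelRow_monomial, add_comm j k, add_assoc]

lemma hankelRow_mul_eq_zero {α : ℕ → F} {i s : ℕ} {A B : F[X]} (hB : B.degree < s)
    (hA : ∀ k < s, hankelRow α (i + k) A = 0) : hankelRow α i (B * A) = 0 := by
  rcases eq_or_ne B 0 with rfl | hB0
  · simp
  rw [as_sum_range' B s ((natDegree_lt_iff_degree_lt hB0).2 hB), Finset.sum_mul, map_sum]
  refine Finset.sum_eq_zero fun k hk => ?_
  rw [← C_mul_X_pow_eq_monomial, mul_assoc, ← smul_eq_C_mul, map_smul, hankelRow_X_pow_mul,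
    hA k (Finset.mem_range.1 hk), smul_zero]

lemma hankel_mulVec_coeff_eq_zero_iff {l m : ℕ} {α : ℕ → F} {P : F[X]} (hP : P.degree < m) :
    hankel F l m α *ᵥ (fun j : Fin m => P.coeff j) = 0 ↔ ∀ i < l, hankelRow α i P = 0 := by
  have hrow (i : Fin l) :
      (hankel F l m α *ᵥ fun j : Fin m => P.coeff j) i = hankelRow α i P := by
    simp only [mulVec, dotProduct, hankel, of_apply, hankelRow, lsum_apply]
    exact sum_fin (fun j (c : F) => α (i + j) * c) (fun _ => mul_zero _) hP
  simp only [funext_iff, hrow, Fin.forall_iff, Pi.zero_apply]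

/-- `IsCharSeq` with kernel vectors replaced by polynomials of degree `< m`. Truncated
subtraction encodes the bounds `deg Bᵢ ≤ m - cᵢ - 1`: a negative bound forces `Bᵢ = 0`. -/
def IsCharPair (n c : ℕ) (A₁ A₂ : F[X]) (α : ℕ → F) : Prop :=
  ∀ l m : ℕ, 1 ≤ l → 1 ≤ m → l + m = n + 2 → ∀ P : F[X], P.degree < m →
    ((∀ i < l, hankelRow α i P = 0) ↔
      ∃ B₁ B₂ : F[X], B₁.degree < ↑(m - c) ∧ B₂.degree < ↑(m + c - (n + 2)) ∧
        P = B₁ * A₁ + B₂ * A₂)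

theorem isCharSeq_iff_isCharPair {n c : ℕ} {A₁ A₂ : F[X]} {α : ℕ → F} (hc : c ≤ n + 2)
    (hA₁ : A₁.degree ≤ c) (hA₂ : A₂.degree ≤ ↑(n + 2 - c)) :
    IsCharSeq F n c A₁ A₂ α ↔ IsCharPair n c A₁ A₂ α := by
  refine forall₄_congr fun l m _ _ => forall_congr' fun hlm => ?_
  rw [Set.ext_iff, (degreeLTEquiv F m).surjective.forall, Subtype.forall]
  refine forall_congr' fun P => ?_
  rw [← mem_degreeLT]
  refine forall_congr' fun hP => ?_
  rw [mem_degreeLT] at hP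
  refine iff_congr ?_ (exists₂_congr fun B₁ B₂ => ?_)
  · exact hankel_mulVec_coeff_eq_zero_iff hP
  · rw [degLE_sub_one_iff, degLE_sub_one_iff,
      show ((m : ℤ) - c).toNat = m - c by omega,
      show ((m : ℤ) - ((n : ℤ) + 2 - c)).toNat = m + c - (n + 2) by omega]
    refine and_congr_right fun hB₁ => and_congr_right fun hB₂ => ?_
    exact coeff_fin_eq_iff hP <| (degree_add_le _ _).trans_lt <|
      max_lt (degree_mul_lt hB₁ hA₁ (by omega)) (degree_mul_lt hB₂ hA₂ (by omega))

namespace IsCharPair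

variable {n c : ℕ} {A₁ A₂ : F[X]} {α : ℕ → F}

lemma hankelRow_left_eq_zero (h : IsCharPair n c A₁ A₂ α) (hA₁ : A₁.degree ≤ c) {i : ℕ}
    (hi : i + c ≤ n) : hankelRow α i A₁ = 0 :=
  (h (n + 1 - c) (c + 1) (by omega) (by omega) (by omega) A₁
    (hA₁.trans_lt (by exact_mod_cast c.lt_succ_self))).2 ⟨1, 0, by simp, by simp, by ring⟩ i
    (by omega)

lemma hankelRow_right_eq_zero (h : IsCharPair n c A₁ A₂ α) (hc : c ≤ n + 2)
    (hA₂ : A₂.degree ≤ ↑(n + 2 - c)) {i : ℕ} (hi : i + 2 ≤ c) : hankelRow α i A₂ = 0 :=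
  (h (c - 1) (n + 3 - c) (by omega) (by omega) (by omega) A₂
    (hA₂.trans_lt (by exact_mod_cast (by omega : n + 2 - c < n + 3 - c)))).2
    ⟨0, 1, by simp, by simp [show n + 3 - c + c - (n + 2) = 1 by omega], by ring⟩ i (by omega)

theorem mod {N r : ℕ} (h : IsCharPair n r A₁ A₂ α) (hA₁ : A₁.natDegree = r) (hA₂ : A₂ ≠ 0)
    (hdr : A₂.natDegree < r) (hrn : r + A₂.natDegree ≤ n + 2) (hN : N + 2 = r + A₂.natDegree) :
    IsCharPair N A₂.natDegree A₂ (A₁ % A₂) α := by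
  set d := A₂.natDegree
  have hA₁0 : A₁ ≠ 0 := ne_zero_of_natDegree_gt (hA₁ ▸ hdr)
  have hA₁deg : A₁.degree ≤ r := degree_le_of_natDegree_le hA₁.le
  have hA₂deg : A₂.degree ≤ d := degree_le_natDegree
  have hA₃deg : (A₁ % A₂).degree < d := (degree_mod_lt A₁ hA₂).trans_eq (degree_eq_natDegree hA₂)
  have hrow₂ (i : ℕ) (hi : i + 2 ≤ r) : hankelRow α i A₂ = 0 :=
    h.hankelRow_right_eq_zero (by omega) (hA₂deg.trans (by exact_mod_cast (by omega))) hi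
  have hrow₃ (i : ℕ) (hi : i + 2 ≤ d) : hankelRow α i (A₁ % A₂) = 0 := by
    have hQA₂ : (A₁ / A₂ * A₂).degree < ↑(r + 1) := by
      rw [eq_sub_of_add_eq (EuclideanDomain.div_add_mod' A₁ A₂)]
      exact (degree_sub_le _ _).trans_lt <|
        max_lt (hA₁deg.trans_lt (by exact_mod_cast r.lt_succ_self))
          (hA₃deg.trans (by exact_mod_cast (by omega : d < r + 1)))
    rw [EuclideanDomain.mod_eq_sub_mul_div, map_sub, h.hankelRow_left_eq_zero hA₁deg (by omega),
      mul_comm, hankelRow_mul_eq_zero (degree_lt_of_degree_mul_lt hA₂ hQA₂)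
        fun k hk => hrow₂ _ (by omega), sub_zero]
  intro l m hl hm hlm P hP
  constructor
  · intro hPα
    obtain ⟨B₁, B₂, hB₁, hB₂, rfl⟩ := (h l (n + 2 - l) hl (by omega) (by omega) P
      (hP.trans_le (by exact_mod_cast (by omega : m ≤ n + 2 - l)))).1 hPα
    have hB₂A₂ : (B₂ * A₂).degree < m := degree_mul_lt hB₂ hA₂deg (by omega)
    have hB₁A₁ : (B₁ * A₁).degree < m := by
      simpa using (degree_sub_le _ _).trans_lt (max_lt hP hB₂A₂)
    have hB₁' : B₁.degree < ↑(m - r) := hA₁ ▸ degree_lt_of_degree_mul_lt hA₁0 hB₁A₁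
    have hB₁A₃ : (B₁ * (A₁ % A₂)).degree < m := degree_mul_lt hB₁' hA₃deg.le (by omega)
    have hdiv : B₁ * A₁ + B₂ * A₂ = (B₂ + B₁ * (A₁ / A₂)) * A₂ + B₁ * (A₁ % A₂) := by
      linear_combination B₁ * (EuclideanDomain.div_add_mod A₁ A₂).symm
    refine ⟨B₂ + B₁ * (A₁ / A₂), B₁, ?_, by rwa [show m + d - (N + 2) = m - r by omega], hdiv⟩
    rw [hdiv] at hP
    exact degree_lt_of_degree_mul_lt hA₂ <| by
      simpa using (degree_sub_le _ _).trans_lt (max_lt hP hB₁A₃)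
  · rintro ⟨B₁, B₂, hB₁, hB₂, rfl⟩ i hi
    rw [map_add, hankelRow_mul_eq_zero hB₁ fun k hk => hrow₂ _ (by omega),
      hankelRow_mul_eq_zero hB₂ fun k hk => hrow₃ _ (by omega), add_zero]

lemma det_hankel_ne_zero (h : IsCharPair n c A₁ A₂ α) (hA₁ : A₁.natDegree = c)
    (hcn : 2 * c ≤ n + 2) : (hankel F c c α).det ≠ 0 := by
  rcases Nat.eq_zero_or_pos c with rfl | hc
  · simp
  have hA₁0 : A₁ ≠ 0 := ne_zero_of_natDegree_gt (hA₁ ▸ hc)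
  rw [Ne, ← exists_mulVec_eq_zero_iff]
  rintro ⟨v, hv0, hv⟩
  obtain ⟨P, hP, rfl⟩ := exists_degree_lt_coeff_eq v
  obtain ⟨B₁, B₂, hB₁, hB₂, rfl⟩ := (h c (n + 2 - c) hc (by omega) (by omega) P
    (hP.trans_le (by exact_mod_cast (by omega)))).1 ((hankel_mulVec_coeff_eq_zero_iff hP).1 hv)
  rw [show n + 2 - c + c - (n + 2) = 0 by omega] at hB₂
  obtain rfl := eq_zero_of_degree_lt_zero hB₂
  rw [zero_mul, add_zero] at hP hv0
  have hB₁ := degree_lt_of_degree_mul_lt hA₁0 hP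
  rw [hA₁, Nat.sub_self] at hB₁
  obtain rfl := eq_zero_of_degree_lt_zero hB₁
  exact hv0 rfl

lemma det_hankel_eq_zero (h : IsCharPair n c A₁ A₂ α) (hA₁ : A₁.natDegree = c) (hA₁0 : A₁ ≠ 0)
    {l : ℕ} (hcl : c < l) (hln : 2 * l ≤ n + 2) : (hankel F l l α).det = 0 := by
  have hdeg : A₁.degree < l := (degree_eq_natDegree hA₁0).trans_lt (by exact_mod_cast hA₁ ▸ hcl)
  rw [← exists_mulVec_eq_zero_iff]
  refine ⟨fun j : Fin l => A₁.coeff j, fun h0 => hA₁0 ?_,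
    (hankel_mulVec_coeff_eq_zero_iff hdeg).2 ?_⟩
  · rw [← leadingCoeff_eq_zero, leadingCoeff, hA₁]
    exact congrFun h0 ⟨c, hcl⟩
  · refine (h l (n + 2 - l) (by omega) (by omega) (by omega) A₁
      (hdeg.trans_le (by exact_mod_cast (by omega)))).2 ⟨1, 0, ?_, by simp, by ring⟩
    rw [degree_one]
    exact_mod_cast (by omega : 0 < n + 2 - l - c)

theorem rhoC_eq (h : IsCharPair n c A₁ A₂ α) (hA₁ : A₁.natDegree = c) (hA₁0 : A₁ ≠ 0)
    (hcn : 2 * c ≤ n + 2) : rhoC F n α = c := by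
  have hc : c ∈ {l | l ≤ (n + 2) / 2 ∧ (hankel F l l α).det ≠ 0} :=
    ⟨by omega, h.det_hankel_ne_zero hA₁ hcn⟩
  refine le_antisymm (csSup_le ⟨c, hc⟩ fun l hl => not_lt.1 fun hcl => ?_)
    (le_csSup ⟨(n + 2) / 2, fun l hl => hl.1⟩ hc)
  exact hl.2 (h.det_hankel_eq_zero hA₁ hA₁0 hcl (by have := hl.1; omega))

theorem rank_hankel (h : IsCharPair n c A₁ A₂ α) (hA₁ : A₁.natDegree = c) (hA₁0 : A₁ ≠ 0)
    {l m : ℕ} (hl : 1 ≤ l) (hm : 1 ≤ m) (hlm : l + m = n + 2) (hcm : c ≤ m)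
    (hmc : m + c ≤ n + 2) : (hankel F l m α).rank = c := by
  let φ : degreeLT F (m - c) →ₗ[F] Fin m → F :=
    LinearMap.pi (fun j : Fin m => lcoeff F j) ∘ₗ LinearMap.mulRight F A₁ ∘ₗ
      (degreeLT F (m - c)).subtype
  have hφ (B : degreeLT F (m - c)) : φ B = fun j : Fin m => (B.1 * A₁).coeff j := rfl
  have hdeg {B : F[X]} (hB : B.degree < ↑(m - c)) : (B * A₁).degree < m :=
    degree_mul_lt hB (hA₁ ▸ degree_le_natDegree) (by omega)
  have hinj : Function.Injective φ := by
    refine (injective_iff_map_eq_zero φ).2 fun B hB => ?_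
    have hBA : B.1 * A₁ = 0 := (coeff_fin_eq_iff (hdeg (mem_degreeLT.1 B.2)) (by simp)).1 <|
      hB.trans (funext fun j => (coeff_zero _).symm)
    exact Subtype.ext ((mul_eq_zero.1 hBA).resolve_right hA₁0)
  have hrange : LinearMap.range φ = LinearMap.ker (hankel F l m α).mulVecLin := by
    ext v
    obtain ⟨P, hP, rfl⟩ := exists_degree_lt_coeff_eq v
    rw [LinearMap.mem_ker, mulVecLin_apply, hankel_mulVec_coeff_eq_zero_iff hP,
      h l m hl hm hlm P hP, show m + c - (n + 2) = 0 by omega]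
    constructor
    · rintro ⟨B, hB⟩
      refine ⟨B.1, 0, mem_degreeLT.1 B.2, by simp, ?_⟩
      rw [zero_mul, add_zero]
      exact ((coeff_fin_eq_iff (hdeg (mem_degreeLT.1 B.2)) hP).1 hB).symm
    · rintro ⟨B₁, B₂, hB₁, hB₂, rfl⟩
      obtain rfl := eq_zero_of_degree_lt_zero hB₂
      exact ⟨⟨B₁, mem_degreeLT.2 hB₁⟩, by simp [hφ]⟩
  have hsum := LinearMap.finrank_range_add_finrank_ker (hankel F l m α).mulVecLin
  rw [← hrange, LinearMap.finrank_range_of_inj hinj, (degreeLTEquiv F (m - c)).finrank_eq,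
    Module.finrank_fin_fun, Module.finrank_fin_fun] at hsum
  rw [Matrix.rank]
  omega

end IsCharPair

end Hankel

theorem stmt_9_general (F : Type) [Field F] (n r : ℕ) (α : ℕ → F)
    (A₁ A₂ : Polynomial F)
    (hrank : (hankel F ((n + 2) / 2) ((n + 3) / 2) α).rank = r)
    (hd1 : A₁.natDegree = r)
    (hd2 : 2 ≤ A₂.natDegree) (hd2' : A₂.natDegree < r)
    (hchar : IsCharSeq F n r A₁ A₂ α) :
    (hankel F ((r + A₂.natDegree - 2 + 2) / 2) ((r + A₂.natDegree - 2 + 3) / 2) α).rank =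
      A₂.natDegree ∧
    rhoC F (r + A₂.natDegree - 2) α = A₂.natDegree ∧
    piC F (r + A₂.natDegree - 2) α = 0 ∧
    IsCharSeq F (r + A₂.natDegree - 2) A₂.natDegree A₂ (A₁ % A₂) α := by
  set d := A₂.natDegree
  have hrn : 2 * r ≤ n + 2 := by
    have := hrank ▸ (hankel F ((n + 2) / 2) ((n + 3) / 2) α).rank_le_height
    omega
  have hA₂ : A₂ ≠ 0 := ne_zero_of_natDegree_gt hd2
  have hA₃ : (A₁ % A₂).degree ≤ ↑(r + d - 2 + 2 - d) :=
    (degree_mod_lt A₁ hA₂).le.trans (degree_le_natDegree.trans (by exact_mod_cast (by omega)))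
  have hold : Hankel.IsCharPair n r A₁ A₂ α :=
    (Hankel.isCharSeq_iff_isCharPair (by omega) (degree_le_of_natDegree_le hd1.le)
      (degree_le_natDegree.trans (by exact_mod_cast (by omega)))).1 hchar
  have hnew : Hankel.IsCharPair (r + d - 2) d A₂ (A₁ % A₂) α :=
    hold.mod hd1 hA₂ hd2' (by omega) (by omega)
  have hrk := hnew.rank_hankel rfl hA₂ (l := (r + d - 2 + 2) / 2) (m := (r + d - 2 + 3) / 2)
    (by omega) (by omega) (by omega) (by omega) (by omega)
  have hρ := hnew.rhoC_eq rfl hA₂ (by omega)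
  refine ⟨hrk, hρ, by rw [piC, hrk, hρ, Nat.sub_self], ?_⟩
  exact (Hankel.isCharSeq_iff_isCharPair (by omega) degree_le_natDegree hA₃).2 hnew

/-- one step of the Euclidean algorithm inside a Hankel sequence.
If `α` is quasi-regular of rank `r = deg A₁ ≥ 2` with characteristic polynomials
`A₁, A₂`, `2 ≤ d₂ = deg A₂ < r`, and `A₃ = A₁ % A₂`, then the truncation
`(α₀,…,α_{r+d₂-2})` is quasi-regular of rank `d₂` with characteristic
polynomials `A₂, A₃`. -/
theorem stmt_9 (F : Type) [Field F] [Fintype F] (n r : ℕ) (α : ℕ → F)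
    (A₁ A₂ : Polynomial F)
    (hr : 2 ≤ r)
    (hrank : (hankel F ((n + 2) / 2) ((n + 3) / 2) α).rank = r)
    (hρ : rhoC F n α = r) (hπ : piC F n α = 0)
    (hcop : IsCoprime A₁ A₂) (hd1 : A₁.natDegree = r)
    (hd2 : 2 ≤ A₂.natDegree) (hd2' : A₂.natDegree < r)
    (hchar : IsCharSeq F n r A₁ A₂ α) :
    (hankel F ((r + A₂.natDegree - 2 + 2) / 2) ((r + A₂.natDegree - 2 + 3) / 2) α).rank =
      A₂.natDegree ∧
    rhoC F (r + A₂.natDegree - 2) α = A₂.natDegree ∧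
    piC F (r + A₂.natDegree - 2) α = 0 ∧
    IsCharSeq F (r + A₂.natDegree - 2) A₂.natDegree A₂ (A₁ % A₂) α :=
  stmt_9_general F n r α A₁ A₂ hrank hd1 hd2 hd2' hchar
end

section
/- Let q be a prime power, α ∈ F_q^{n+1} with rank H_{n₁,n₂}(α) = r, ρ(α) = r, π(α) = 0 and r ≥ 2, and let A₁, A₂ be the characteristic polynomials with deg A₂ < deg A₁ = r. Let A₁, A₂, ..., A_s, 1 be the sequence of polynomials obtained by the Euclidean algorithm applied to (A₁, A₂) (so A_{s+1} = 1 is the last nonzero remainder, valid since A₁, A₂ are coprime). Then the number of consecutive zeros at the beginning of the sequence α equals deg A_s - 1. -/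
open Matrix Polynomial

/-!
The extended Euclidean algorithm writes the last remainder `A (s + 1)`, a nonzero constant, as
`U A₁ + W A₂` with `deg W = r - deg A_s` and `deg U ≤ r - deg A_s`. The kernel of the one-row
Hankel matrix `H_{1,n+1}(α)` is the hyperplane orthogonal to `α`, so by the kernel structure
`α_j = 0` exactly when `X^j = B₁ A₁ + B₂ A₂` with `deg B₁ ≤ n - r` and `deg B₂ ≤ r - 2`.
Multiplying the Bézout identity by `X^j` gives such a representation for `j ≤ deg A_s - 2`.
For `j = deg A_s - 1`, eliminating `A₂` between the two identities leaves a multiple of `A₁` of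
degree `< r`, hence zero, which forces `B₂` to have degree `r - 1`.
-/

section EuclideanRemainders

variable {K : Type*} [Field K]

lemma natDegree_div_add_natDegree {p q : K[X]} (hq : q ≠ 0) (hqp : q.degree ≤ p.degree) :
    (p / q).natDegree + q.natDegree = p.natDegree := by
  have hpq : p / q ≠ 0 := (Polynomial.div_eq_zero_iff hq).not.mpr (not_lt.mpr hqp)
  have hp : p ≠ 0 := fun h => hpq (by simp [h])
  have h := degree_add_div hq hqp
  rw [degree_eq_natDegree hq, degree_eq_natDegree hpq, degree_eq_natDegree hp] at h
  rw [add_comm]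
  exact_mod_cast h

/-- `p = U * a + W * b` with Bézout coefficients of the sizes the extended Euclidean algorithm
produces for a remainder `p` whose predecessor in the remainder sequence has degree `t`. -/
def IsEuclidCombination (a b p : K[X]) (t : ℕ) : Prop :=
  ∃ U W : K[X], p = U * a + W * b ∧ W ≠ 0 ∧ W.natDegree + t = a.natDegree ∧
    U.natDegree + t ≤ a.natDegree

namespace IsEuclidCombination

variable {a b p p' q : K[X]} {t t' u : ℕ}

lemma le_natDegree (h : IsEuclidCombination a b p t) : t ≤ a.natDegree := by
  obtain ⟨-, W, -, -, hWt, -⟩ := h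
  omega

lemma right : IsEuclidCombination a b b a.natDegree :=
  ⟨0, 1, by ring, one_ne_zero, by simp, by simp⟩

lemma mod (hb : b ≠ 0) (hba : b.degree ≤ a.degree) :
    IsEuclidCombination a b (a % b) b.natDegree := by
  have hq : a / b ≠ 0 := (Polynomial.div_eq_zero_iff hb).not.mpr (not_lt.mpr hba)
  refine ⟨1, -(a / b), by rw [EuclideanDomain.mod_eq_sub_mul_div]; ring, neg_ne_zero.mpr hq,
    ?_, ?_⟩
  · rw [natDegree_neg, natDegree_div_add_natDegree hb hba]
  · simpa using natDegree_le_natDegree hba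

lemma sub_mul (h : IsEuclidCombination a b p t) (h' : IsEuclidCombination a b p' t')
    (hq : q ≠ 0) (hqu : q.natDegree + u = t') (hut : u < t) :
    IsEuclidCombination a b (p - q * p') u := by
  obtain ⟨U, W, rfl, -, hWt, hUt⟩ := h
  obtain ⟨U', W', rfl, hW', hWt', hUt'⟩ := h'
  have hqW' : (q * W').natDegree = q.natDegree + W'.natDegree := natDegree_mul hq hW'
  have hW_lt : W.natDegree < (q * W').natDegree := by omega
  refine ⟨U - q * U', W - q * W', by ring, ?_, ?_, ?_⟩
  · exact sub_ne_zero.mpr fun h => hW_lt.ne (by rw [h])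
  · rw [natDegree_sub_eq_right_of_natDegree_lt hW_lt]
    omega
  · have hqU' : (q * U').natDegree ≤ q.natDegree + U'.natDegree := natDegree_mul_le
    have := natDegree_sub_le U (q * U')
    rw [max_def] at this
    split_ifs at this <;> omega

lemma one_of_degree_eq_zero (h : IsEuclidCombination a b p t) (hp : p.degree = 0) :
    IsEuclidCombination a b 1 t := by
  obtain ⟨c, rfl⟩ : ∃ c, p = C c := ⟨_, eq_C_of_degree_eq_zero hp⟩
  have hc : c ≠ 0 := fun hc => by simp [hc] at hp
  obtain ⟨U, W, hUW, hW, hWt, hUt⟩ := h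
  have hc' : c⁻¹ ≠ 0 := inv_ne_zero hc
  refine ⟨C c⁻¹ * U, C c⁻¹ * W, ?_, ?_, ?_, ?_⟩
  · rw [mul_assoc, mul_assoc, ← mul_add, ← hUW, ← C_mul, inv_mul_cancel₀ hc, C_1]
  · exact mul_ne_zero (C_ne_zero.mpr hc') hW
  · rwa [natDegree_C_mul hc']
  · rwa [natDegree_C_mul hc']

lemma exists_X_pow_eq (h : IsEuclidCombination a b 1 t) {j : ℕ} (hj : j + 2 ≤ t) :
    ∃ B₁ B₂ : K[X], B₁.natDegree + 2 ≤ a.natDegree ∧ B₂.natDegree + 2 ≤ a.natDegree ∧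
      X ^ j = B₁ * a + B₂ * b := by
  obtain ⟨U, W, h1, -, hWt, hUt⟩ := h
  have hXU : (X ^ j * U).natDegree ≤ j + U.natDegree :=
    natDegree_mul_le.trans (by rw [natDegree_X_pow])
  have hXW : (X ^ j * W).natDegree ≤ j + W.natDegree :=
    natDegree_mul_le.trans (by rw [natDegree_X_pow])
  exact ⟨X ^ j * U, X ^ j * W, by omega, by omega, by linear_combination X ^ j * h1⟩

lemma X_pow_pred_ne (h : IsEuclidCombination a b 1 t) (ht : 1 ≤ t) (B₁ : K[X]) {B₂ : K[X]}
    (hB₂ : B₂.natDegree + 2 ≤ a.natDegree) : X ^ (t - 1) ≠ B₁ * a + B₂ * b := by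
  obtain ⟨U, W, h1, hW, hWt, -⟩ := h
  intro hX
  have ha : a ≠ 0 := fun ha => by simp [ha] at hB₂
  have hWX : (W * X ^ (t - 1)).natDegree = W.natDegree + (t - 1) := natDegree_mul_X_pow _ hW
  -- eliminating `b` leaves a multiple of `a` of degree less than `deg a`
  have hkey : B₂ - W * X ^ (t - 1) = (B₂ * U - W * B₁) * a := by
    linear_combination B₂ * h1 - W * hX
  have hG : B₂ * U - W * B₁ = 0 := by
    by_contra hG
    have hsub := natDegree_sub_le B₂ (W * X ^ (t - 1))
    rw [hkey, natDegree_mul hG ha, max_def] at hsub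
    split_ifs at hsub <;> omega
  rw [hG, zero_mul, sub_eq_zero] at hkey
  rw [hkey] at hB₂
  omega

end IsEuclidCombination

def IsRemainderSeq (A : ℕ → K[X]) (s : ℕ) : Prop :=
  ∀ i, 1 ≤ i → i ≤ s - 1 → A (i + 2) = A i % A (i + 1)

namespace IsRemainderSeq

variable {A : ℕ → K[X]} {s : ℕ}

lemma ne_zero (hA : IsRemainderSeq A s) (hs : A s ≠ 0) (hs1 : A (s + 1) ≠ 0) {i : ℕ}
    (hi : 1 ≤ i) (his : i ≤ s + 1) : A i ≠ 0 := by
  -- `A i = 0` would make `A (i + 2) = 0 % A (i + 1) = 0`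
  suffices h : ∀ k i, 1 ≤ i → i + k = s → A i ≠ 0 ∧ A (i + 1) ≠ 0 by
    rcases Nat.lt_or_ge i (s + 1) with hlt | hge
    · exact (h (s - i) i hi (by omega)).1
    · obtain rfl : i = s + 1 := by omega
      exact hs1
  intro k
  induction k with
  | zero =>
    rintro i - rfl
    exact ⟨hs, hs1⟩
  | succ k ih =>
    intro i hi hik
    obtain ⟨h1, h2⟩ := ih (i + 1) (by omega) (by omega)
    refine ⟨fun h0 => h2 ?_, h1⟩
    rw [hA i hi (by omega), h0, EuclideanDomain.zero_mod]

lemma degree_lt (hA : IsRemainderSeq A s) (h12 : (A 2).degree < (A 1).degree) (hs : A s ≠ 0)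
    (hs1 : A (s + 1) ≠ 0) {i : ℕ} (hi : 1 ≤ i) (his : i ≤ s) :
    (A (i + 1)).degree < (A i).degree := by
  obtain rfl | hi := hi.eq_or_lt
  · exact h12
  · obtain ⟨k, rfl⟩ : ∃ k, i = k + 1 := ⟨i - 1, by omega⟩
    rw [hA k (by omega) (by omega)]
    exact EuclideanDomain.mod_lt _ (hA.ne_zero hs hs1 (by omega) (by omega))

lemma isEuclidCombination (hA : IsRemainderSeq A s) (h12 : (A 2).degree < (A 1).degree)
    (hs : A s ≠ 0) (hs1 : A (s + 1) ≠ 0) {i : ℕ} (hi : 1 ≤ i) (his : i ≤ s) :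
    IsEuclidCombination (A 1) (A 2) (A (i + 1)) (A i).natDegree := by
  have hne {k} (h1 : 1 ≤ k) (h2 : k ≤ s + 1) : A k ≠ 0 := hA.ne_zero hs hs1 h1 h2
  have hlt {k} (h1 : 1 ≤ k) (h2 : k ≤ s) : (A (k + 1)).natDegree < (A k).natDegree :=
    natDegree_lt_natDegree (hne (by omega) (by omega)) (hA.degree_lt h12 hs hs1 h1 h2)
  suffices h : ∀ i, 1 ≤ i → i + 1 ≤ s →
      IsEuclidCombination (A 1) (A 2) (A (i + 1)) (A i).natDegree ∧
      IsEuclidCombination (A 1) (A 2) (A (i + 2)) (A (i + 1)).natDegree by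
    obtain rfl | hi := hi.eq_or_lt
    · exact .right
    · obtain ⟨k, rfl⟩ : ∃ k, i = k + 1 := ⟨i - 1, by omega⟩
      exact (h k (by omega) his).2
  intro i hi
  induction i, hi using Nat.le_induction with
  | base =>
    intro hs2
    refine ⟨.right, ?_⟩
    rw [hA 1 le_rfl (by omega)]
    exact .mod (hne (by omega) (by omega)) h12.le
  | succ i hi ih =>
    intro his
    obtain ⟨h, h'⟩ := ih (by omega)
    refine ⟨h', ?_⟩
    have hdeg : (A (i + 2)).degree ≤ (A (i + 1)).degree :=
      (hA.degree_lt h12 hs hs1 (by omega) (by omega)).le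
    have hq : A (i + 1) / A (i + 2) ≠ 0 :=
      (Polynomial.div_eq_zero_iff (hne (by omega) (by omega))).not.mpr (not_lt.mpr hdeg)
    rw [hA (i + 1) (by omega) (by omega), EuclideanDomain.mod_eq_sub_mul_div, mul_comm]
    exact h.sub_mul h' hq (natDegree_div_add_natDegree (hne (by omega) (by omega)) hdeg)
      ((hlt (by omega) (by omega)).trans (hlt hi (by omega)))

end IsRemainderSeq

end EuclideanRemainders

lemma degLE_iff_natDegree_le {F : Type} [Field F] {B : F[X]} {k : ℕ} :
    degLE F B k ↔ B.natDegree ≤ k := by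
  rw [natDegree_le_iff_coeff_eq_zero]
  exact forall_congr' fun i => by rw [Nat.cast_lt]

lemma hankel_one_mulVec_coeff_X_pow {F : Type} [Field F] (α : ℕ → F) {m j : ℕ} (hj : j < m) :
    hankel F 1 m α *ᵥ (fun i : Fin m => (X ^ j : F[X]).coeff i) = fun _ => α j := by
  ext i
  rw [mulVec, dotProduct, Finset.sum_eq_single ⟨j, hj⟩]
  · simp [hankel, Fin.fin_one_eq_zero i]
  · intro k _ hk
    simp [coeff_X_pow, Fin.val_ne_of_ne hk]
  · simp

namespace IsCharSeq

variable {F : Type} [Field F] {n r : ℕ} {A₁ A₂ : F[X]} {α : ℕ → F}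

lemma apply_eq_zero_of_X_pow_eq (h : IsCharSeq F n r A₁ A₂ α) {j : ℕ} (hj : j ≤ n)
    {B₁ B₂ : F[X]} (hB₁ : B₁.natDegree + r ≤ n) (hB₂ : B₂.natDegree + 2 ≤ r)
    (hX : X ^ j = B₁ * A₁ + B₂ * A₂) : α j = 0 := by
  have hmem : (fun i : Fin (n + 1) => (X ^ j : F[X]).coeff i) ∈
      {v | hankel F 1 (n + 1) α *ᵥ v = 0} := by
    rw [h 1 (n + 1) le_rfl (by omega) (by omega)]
    refine ⟨B₁, B₂, ?_, ?_, by rw [hX]⟩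
    · rw [show ((n + 1 : ℕ) : ℤ) - r - 1 = ((n - r : ℕ) : ℤ) by omega, degLE_iff_natDegree_le]
      omega
    · rw [show ((n + 1 : ℕ) : ℤ) - (n + 2 - r) - 1 = ((r - 2 : ℕ) : ℤ) by omega,
        degLE_iff_natDegree_le]
      omega
  rw [Set.mem_ofPred_eq, hankel_one_mulVec_coeff_X_pow α (Nat.lt_succ_of_le hj)] at hmem
  exact congrFun hmem 0

lemma exists_X_pow_eq_of_apply_eq_zero (h : IsCharSeq F n r A₁ A₂ α) (hr : 2 ≤ r)
    (hrn : 2 * r ≤ n + 2) (hA₁ : A₁.natDegree = r) (hA₂ : A₂.natDegree ≤ r) {j : ℕ} (hj : j ≤ n)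
    (hα : α j = 0) : ∃ B₁ B₂ : F[X], B₂.natDegree + 2 ≤ r ∧ X ^ j = B₁ * A₁ + B₂ * A₂ := by
  have hmem : (fun i : Fin (n + 1) => (X ^ j : F[X]).coeff i) ∈
      {v | hankel F 1 (n + 1) α *ᵥ v = 0} := by
    rw [Set.mem_ofPred_eq, hankel_one_mulVec_coeff_X_pow α (Nat.lt_succ_of_le hj), hα]
    rfl
  rw [h 1 (n + 1) le_rfl (by omega) (by omega)] at hmem
  obtain ⟨B₁, B₂, hB₁, hB₂, hv⟩ := hmem
  rw [show ((n + 1 : ℕ) : ℤ) - r - 1 = ((n - r : ℕ) : ℤ) by omega, degLE_iff_natDegree_le] at hB₁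
  rw [show ((n + 1 : ℕ) : ℤ) - (n + 2 - r) - 1 = ((r - 2 : ℕ) : ℤ) by omega,
    degLE_iff_natDegree_le] at hB₂
  refine ⟨B₁, B₂, by omega, (ext_iff_natDegree_le (n := n) ?_ ?_).mpr fun i hi => ?_⟩
  · rw [natDegree_X_pow]
    exact hj
  · have h₁ : (B₁ * A₁).natDegree ≤ B₁.natDegree + A₁.natDegree := natDegree_mul_le
    have h₂ : (B₂ * A₂).natDegree ≤ B₂.natDegree + A₂.natDegree := natDegree_mul_le
    exact natDegree_add_le_of_degree_le (by omega) (by omega)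
  · exact congrFun hv ⟨i, Nat.lt_succ_of_le hi⟩

end IsCharSeq

theorem stmt_10_general (F : Type) [Field F] (n r s : ℕ) (α : ℕ → F)
    (A : ℕ → Polynomial F)
    (hr : 2 ≤ r) (hs : 2 ≤ s)
    (hrank : (hankel F ((n + 2) / 2) ((n + 3) / 2) α).rank = r)
    (hd1 : (A 1).natDegree = r) (hd2 : (A 2).degree < (A 1).degree)
    (hchar : IsCharSeq F n r (A 1) (A 2) α)
    (hrec : ∀ i : ℕ, 1 ≤ i → i ≤ s - 1 → A (i + 2) = A i % A (i + 1))
    (hAs : 1 ≤ (A s).natDegree)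
    (hlast : (A (s + 1)).degree = 0) :
    (∀ i : ℕ, i < (A s).natDegree - 1 → α i = 0) ∧ α ((A s).natDegree - 1) ≠ 0 := by
  have hrn : 2 * r ≤ n + 2 := by
    have := rank_le_card_height (hankel F ((n + 2) / 2) ((n + 3) / 2) α)
    rw [hrank, Fintype.card_fin] at this
    omega
  have hbez : IsEuclidCombination (A 1) (A 2) 1 (A s).natDegree :=
    (IsRemainderSeq.isEuclidCombination hrec hd2 (by rintro h; simp [h] at hAs)
      (by rintro h; simp [h] at hlast) (by omega) le_rfl).one_of_degree_eq_zero hlast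
  have hdr : (A s).natDegree ≤ r := hd1 ▸ hbez.le_natDegree
  refine ⟨fun j hj => ?_, fun hα => ?_⟩
  · obtain ⟨B₁, B₂, hB₁, hB₂, hX⟩ := hbez.exists_X_pow_eq (j := j) (by omega)
    exact hchar.apply_eq_zero_of_X_pow_eq (by omega) (by omega) (by omega) hX
  · obtain ⟨B₁, B₂, hB₂, hX⟩ := hchar.exists_X_pow_eq_of_apply_eq_zero hr hrn hd1
      (hd1 ▸ natDegree_le_natDegree hd2.le) (by omega) hα
    exact hbez.X_pow_pred_ne hAs B₁ (by omega) hX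

/-- if `α` is quasi-regular of rank `r ≥ 2` with characteristic polynomials
`A 1, A 2` (`deg (A 2) < deg (A 1) = r`), and `A 1, A 2, …, A s, A (s+1)` is the remainder
sequence of the Euclidean algorithm with `A (s+1)` the final (nonzero constant) remainder,
then the number of consecutive zeros at the beginning of `α` is exactly `deg (A s) - 1`. -/
theorem stmt_10 (F : Type) [Field F] [Fintype F] (n r s : ℕ) (α : ℕ → F)
    (A : ℕ → Polynomial F)
    (hr : 2 ≤ r) (hs : 2 ≤ s)
    (hrank : (hankel F ((n + 2) / 2) ((n + 3) / 2) α).rank = r)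
    (hρ : rhoC F n α = r) (hπ : piC F n α = 0)
    (hcop : IsCoprime (A 1) (A 2))
    (hd1 : (A 1).natDegree = r) (hd2 : (A 2).degree < (A 1).degree)
    (hchar : IsCharSeq F n r (A 1) (A 2) α)
    (hrec : ∀ i : ℕ, 1 ≤ i → i ≤ s - 1 → A (i + 2) = A i % A (i + 1))
    (hAs : 1 ≤ (A s).natDegree)
    (hlast : (A (s + 1)).degree = 0) :
    (∀ i : ℕ, i < (A s).natDegree - 1 → α i = 0) ∧ α ((A s).natDegree - 1) ≠ 0 :=
  stmt_10_general F n r s α A hr hs hrank hd1 hd2 hchar hrec hAs hlast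
end
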